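/- arXiv:2603.27901 — 4 statements merged into one kernel-verified Lean document; each statement's English description precedes it below -/
import Mathlib

section
/- Oscillating profiles corollary. There exist a limit computable set A ⊆ ℕ and sets W_0, W_1, … ⊆ ℕ such that W_n ≡_bfo A for every n ∈ ℕ, and ¬(W_n ≤₁ W_m) whenever n ≠ m. Hence {deg₁(W_n) : n ∈ ℕ} is an infinite antichain of 1-degrees inside a single bounded finite-one degree. -/
/-- One-one reducibility: `B ≤₁ C` via a total computable injective function. -/
def OneOneRed (B C : Set ℕ) : Prop :=
  ∃ f : ℕ → ℕ, Computable f ∧ Function.Injective f ∧ ∀ x, x ∈ B ↔ f x ∈ C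

/-- Strict one-one reducibility: `B <₁ C`. -/
def OneOneLt (B C : Set ℕ) : Prop :=
  OneOneRed B C ∧ ¬ OneOneRed C B

/-- Bounded finite-one reducibility: `B ≤_bfo C` via a total computable function
all of whose fibers have size at most some constant `c ≥ 1`. -/
def BfoRed (B C : Set ℕ) : Prop :=
  ∃ f : ℕ → ℕ, Computable f ∧
    (∃ c : ℕ, 1 ≤ c ∧ ∀ y, {x | f x = y}.encard ≤ (c : ℕ∞)) ∧
    ∀ x, x ∈ B ↔ f x ∈ C

/-- Bounded finite-one equivalence: `B ≡_bfo C`. -/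
def BfoEquiv (B C : Set ℕ) : Prop :=
  BfoRed B C ∧ BfoRed C B

/-- `A` is limit computable (equivalently `A ≤_T ∅'`, i.e. `Δ⁰₂`). -/
def LimitComputable (A : Set ℕ) : Prop :=
  ∃ g : ℕ → ℕ → Bool, Computable₂ g ∧
    ∀ n, ∃ s₀, ∀ s, s₀ ≤ s → (g s n = true ↔ n ∈ A)

/-- `a_k`, the left endpoint of the `k`-th block `I_k = [a_k, a_{k+1})`;
`a_0 = 0` and `a_{k+1} = a_k + k!`. -/
def blockStart (k : ℕ) : ℕ := ∑ m ∈ Finset.range k, Nat.factorial m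

/-!
The set `X` is built in stages, each stage appending a finite block of new elements all lying
above a current *floor*; `A` is `X` on the even numbers and `W n` adds, on the odd numbers, the
elements of `X` whose color (first `Nat.unpair` coordinate) is `n`. Both reductions between `A`
and `W n` are computable and at most two-to-one, independently of `X`.

Stage `⟨e, ⟨n, m⟩⟩` defeats `φ_e` as a 1-reduction of `W n` to `W m`: it appends more elements
of color `n` than there were elements before, and then lifts the floor above every value of `φ_e`
on the part of `W n` that is already determined. Below the new floor `W n` then has strictly more
elements than `W m`, so `φ_e` cannot map the former injectively into the latter. The bound on
`φ_e` is only `∅'`-computable, but its stagewise approximations through `evaln` converge, and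
membership of `k` in `X` is settled at stage `k + 1`; hence `A` is limit computable.
-/

open Filter
open Nat.Partrec (Code)
open Nat.Partrec.Code

namespace OscillatingProfiles

def color (k : ℕ) : ℕ := k.unpair.1

def A (X : Set ℕ) : Set ℕ := {x | x % 2 = 0 ∧ x / 2 ∈ X}

def W (X : Set ℕ) (n : ℕ) : Set ℕ := {x | x / 2 ∈ X ∧ (x % 2 = 0 ∨ color (x / 2) = n)}

theorem primrec_color : Primrec color := Primrec.fst.comp Primrec.unpair

theorem primrecPred_even : PrimrecPred fun x : ℕ => x % 2 = 0 :=
  Primrec.eq.comp (Primrec.nat_mod.comp .id (.const 2)) (.const 0)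

theorem primrec_list_sum : Primrec (List.sum : List ℕ → ℕ) :=
  (Primrec.list_foldr .id (.const 0)
    (Primrec.nat_add.comp (Primrec.fst.comp .snd) (Primrec.snd.comp .snd)).to₂).of_eq
    fun l => by induction l <;> simp_all

theorem bfoRed_of_mem_pair {B C : Set ℕ} {f : ℕ → ℕ} (g : ℕ → ℕ) (hf : Computable f)
    (hfg : ∀ x, x = f x ∨ x = g (f x)) (hred : ∀ x, x ∈ B ↔ f x ∈ C) : BfoRed B C := by
  refine ⟨f, hf, ⟨2, by norm_num, fun y => ?_⟩, hred⟩
  calc {x | f x = y}.encard ≤ ({y, g y} : Set ℕ).encard :=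
        Set.encard_le_encard fun x (hx : f x = y) => hx ▸ hfg x
    _ ≤ 2 := (Set.encard_insert_le _ _).trans (by simp; rfl)

theorem bfoRed_W_A (X : Set ℕ) (n : ℕ) : BfoRed (W X n) (A X) := by
  refine bfoRed_of_mem_pair (· + 1)
    (f := fun x => if x % 2 = 0 then x else if color (x / 2) = n then x - 1 else x) ?_ ?_ ?_
  · refine Primrec.to_comp <| Primrec.ite primrecPred_even .id <| Primrec.ite ?_
      (Primrec.nat_sub.comp .id (.const 1)) .id
    exact Primrec.eq.comp (primrec_color.comp (Primrec.nat_div.comp .id (.const 2))) (.const n)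
  · intro x
    split_ifs <;> omega
  · intro x
    by_cases hx : x % 2 = 0
    · simp [W, A, hx]
    · by_cases hc : color (x / 2) = n
      · have h1 : (x - 1) % 2 = 0 := by omega
        have h2 : (x - 1) / 2 = x / 2 := by omega
        simp [W, A, hx, hc, h1, h2]
      · simp [W, A, hx, hc]

theorem bfoRed_A_W (X : Set ℕ) (n : ℕ) : BfoRed (A X) (W X n) := by
  refine bfoRed_of_mem_pair (fun y => (y / 2).unpair.2)
    (f := fun x => if x % 2 = 0 then x else 2 * Nat.pair (n + 1) x + 1) ?_ ?_ ?_
  · refine Primrec.to_comp <| Primrec.ite primrecPred_even .id ?_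
    exact Primrec.succ.comp <| Primrec.nat_mul.comp (.const 2) <|
      Primrec₂.natPair.comp (.const (n + 1)) .id
  · intro x
    split_ifs
    · exact .inl rfl
    · right
      have h : (2 * Nat.pair (n + 1) x + 1) / 2 = Nat.pair (n + 1) x := by omega
      simp [h]
  · intro x
    by_cases hx : x % 2 = 0
    · simp [W, A, hx]
    · have h1 : (2 * Nat.pair (n + 1) x + 1) / 2 = Nat.pair (n + 1) x := by omega
      have h2 : (2 * Nat.pair (n + 1) x + 1) % 2 = 1 := by omega
      simp [W, A, hx, h1, h2, color]

def wFinset (S : Finset ℕ) (n : ℕ) : Finset ℕ :=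
  S.image (2 * ·) ∪ (S.filter (color · = n)).image (2 * · + 1)

theorem mem_wFinset {S : Finset ℕ} {n x : ℕ} : x ∈ wFinset S n ↔ x ∈ W S n := by
  simp only [wFinset, Finset.mem_union, Finset.mem_image, Finset.mem_filter, W,
    Set.mem_ofPred_eq, Finset.mem_coe]
  constructor
  · rintro (⟨k, hk, rfl⟩ | ⟨k, ⟨hk, hc⟩, rfl⟩)
    · exact ⟨by simpa using hk, .inl (by omega)⟩
    · have h : (2 * k + 1) / 2 = k := by omega
      rw [h]
      exact ⟨hk, .inr hc⟩
  · rintro ⟨hk, hx | hc⟩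
    · exact .inl ⟨x / 2, hk, by omega⟩
    · rcases Nat.even_or_odd' x with ⟨k, rfl | rfl⟩
      · exact .inl ⟨k, by simpa using hk, rfl⟩
      · have h : (2 * k + 1) / 2 = k := by omega
        rw [h] at hk hc
        exact .inr ⟨k, ⟨hk, hc⟩, rfl⟩

theorem card_wFinset (S : Finset ℕ) (n : ℕ) :
    (wFinset S n).card = S.card + (S.filter (color · = n)).card := by
  rw [wFinset, Finset.card_union_of_disjoint, Finset.card_image_of_injective _ (by intro a b; simp),
    Finset.card_image_of_injective _ (fun a b h => by simpa using h)]
  simp only [Finset.disjoint_left, Finset.mem_image]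
  rintro _ ⟨a, -, rfl⟩ ⟨b, -, h⟩
  omega

theorem mem_W_iff_of_lt {X : Set ℕ} {S : Finset ℕ} {B x n : ℕ}
    (hS : ∀ k < B, k ∈ X ↔ k ∈ S) (hx : x < 2 * B) : x ∈ W X n ↔ x ∈ W S n := by
  simp only [W, Set.mem_ofPred_eq, Finset.mem_coe, hS (x / 2) (by omega)]

def block (fl n t : ℕ) : List ℕ := (List.range t).map fun j => Nat.pair n (fl + j)

section Block

variable {fl n t x : ℕ}

theorem mem_block : x ∈ block fl n t ↔ ∃ j < t, Nat.pair n (fl + j) = x := by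
  simp [block]

theorem color_of_mem_block (hx : x ∈ block fl n t) : color x = n := by
  obtain ⟨j, -, rfl⟩ := mem_block.1 hx
  simp [color]

theorem le_of_mem_block (hx : x ∈ block fl n t) : fl ≤ x := by
  obtain ⟨j, -, rfl⟩ := mem_block.1 hx
  exact (Nat.le_add_right fl j).trans (Nat.right_le_pair n _)

theorem lt_of_mem_block (hx : x ∈ block fl n t) : x < Nat.pair n (fl + t) := by
  obtain ⟨j, hj, rfl⟩ := mem_block.1 hx
  exact Nat.pair_lt_pair_right n (by omega)

theorem card_toFinset_block : (block fl n t).toFinset.card = t := by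
  rw [List.toFinset_card_of_nodup, block, List.length_map, List.length_range]
  exact List.nodup_range.map fun a b h => by simpa using h

end Block

def height (i : ℕ) (st : List ℕ × ℕ) : ℕ :=
  Nat.pair i.unpair.2.unpair.1 (st.2 + (st.1.length + 1))

/-- A state `(L, fl)` lists the elements of `X` enumerated so far, all below the floor `fl`.
Stage `i = ⟨e, ⟨n, m⟩⟩` works against `φ_e` reducing `W n` to `W m`. -/
def step (O : ℕ → ℕ → ℕ) (i : ℕ) (st : List ℕ × ℕ) : List ℕ × ℕ :=
  (st.1 ++ block st.2 i.unpair.2.unpair.1 (st.1.length + 1),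
    max (height i st) (O i.unpair.1 (2 * height i st)))

def stage (O : ℕ → ℕ → ℕ) : ℕ → List ℕ × ℕ
  | 0 => ([], 0)
  | i + 1 => step O i (stage O i)

def X (O : ℕ → ℕ → ℕ) : Set ℕ := {k | ∃ i, k ∈ (stage O i).1}

section Stage

variable (O : ℕ → ℕ → ℕ)

theorem floor_lt_height (i : ℕ) (st : List ℕ × ℕ) : st.2 < height i st :=
  (Nat.lt_add_of_pos_right (Nat.succ_pos _)).trans_le (Nat.right_le_pair _ _)

theorem lt_floor_of_mem_stage : ∀ {i k : ℕ}, k ∈ (stage O i).1 → k < (stage O i).2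
  | 0, _, hk => by simp [stage] at hk
  | i + 1, _, hk => by
    rw [stage, step, List.mem_append] at hk
    refine lt_max_of_lt_left ?_
    exact hk.elim (fun h => (lt_floor_of_mem_stage h).trans (floor_lt_height i _)) lt_of_mem_block

theorem lt_height_of_mem_stage_succ {i k : ℕ} (hk : k ∈ (stage O (i + 1)).1) :
    k < height i (stage O i) := by
  rw [stage, step, List.mem_append] at hk
  exact hk.elim (fun h => (lt_floor_of_mem_stage O h).trans (floor_lt_height i _)) lt_of_mem_block

theorem floor_strictMono : StrictMono fun i => (stage O i).2 :=
  strictMono_nat_of_lt_succ fun i => (floor_lt_height i _).trans_le (le_max_left _ _)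

theorem le_floor_of_mem_stage_succ {i k : ℕ} (hk : k ∈ (stage O (i + 1)).1)
    (hk' : k ∉ (stage O i).1) : (stage O i).2 ≤ k := by
  simp only [stage, step, List.mem_append] at hk
  exact le_of_mem_block (hk.resolve_left hk')

theorem mem_stage_iff_of_le {i j k : ℕ} (hij : i ≤ j) (hk : k < (stage O i).2) :
    k ∈ (stage O j).1 ↔ k ∈ (stage O i).1 := by
  induction j, hij using Nat.le_induction with
  | base => rfl
  | succ j hij ih =>
    rw [← ih]
    refine ⟨fun h => by_contra fun h' => ?_, fun h => by simp [stage, step, h]⟩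
    have := le_floor_of_mem_stage_succ O h h'
    have := (floor_strictMono O).monotone hij
    omega

theorem mem_X_iff {i k : ℕ} (hk : k < (stage O i).2) : k ∈ X O ↔ k ∈ (stage O i).1 := by
  refine ⟨fun ⟨j, hj⟩ => ?_, fun h => ⟨i, h⟩⟩
  rcases le_total i j with hij | hji
  · exact (mem_stage_iff_of_le O hij hk).1 hj
  · exact (mem_stage_iff_of_le O hji (lt_floor_of_mem_stage O hj)).2 hj

theorem mem_X_iff_mem_stage_succ (k : ℕ) : k ∈ X O ↔ k ∈ (stage O (k + 1)).1 :=
  mem_X_iff O <| (floor_strictMono O).le_apply.trans_lt' (Nat.lt_succ_self k)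

theorem card_filter_color_lt {e n m : ℕ} (hnm : n ≠ m) :
    ((stage O (Nat.pair e (Nat.pair n m) + 1)).1.toFinset.filter (color · = m)).card <
      ((stage O (Nat.pair e (Nat.pair n m) + 1)).1.toFinset.filter (color · = n)).card := by
  set st := stage O (Nat.pair e (Nat.pair n m))
  set B := (block st.2 n (st.1.length + 1)).toFinset
  have hB : ∀ x ∈ B, color x = n := fun x hx => color_of_mem_block (List.mem_toFinset.1 hx)
  have hBm : B.filter (color · = m) = ∅ :=
    Finset.filter_eq_empty_iff.2 fun x hx => (hB x hx).symm ▸ hnm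
  rw [show (stage O (Nat.pair e (Nat.pair n m) + 1)).1 = st.1 ++ block st.2 n (st.1.length + 1) by
      simp [st, stage, step], List.toFinset_append, Finset.filter_union, Finset.filter_union, hBm,
    Finset.union_empty, Finset.filter_true_of_mem hB]
  calc (st.1.toFinset.filter (color · = m)).card ≤ st.1.length :=
        (Finset.card_filter_le _ _).trans (List.toFinset_card_le _)
    _ < B.card := by rw [card_toFinset_block]; omega
    _ ≤ _ := Finset.card_le_card Finset.subset_union_right

theorem not_oneOneRed_W
    (hO : ∀ f : ℕ → ℕ, Computable f → ∃ e, ∀ b, ∀ x < b, f x < O e b) {n m : ℕ} (hnm : n ≠ m) :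
    ¬ OneOneRed (W (X O) n) (W (X O) m) := by
  rintro ⟨f, hf, hinj, hred⟩
  obtain ⟨e, he⟩ := hO f hf
  have hcolor := card_filter_color_lt O (e := e) hnm
  set i := Nat.pair e (Nat.pair n m)
  set S := (stage O (i + 1)).1.toFinset
  set K := height i (stage O i)
  have hfloor : (stage O (i + 1)).2 = max K (O e (2 * K)) := by
    simp [i, K, stage, step]
  have hX : ∀ k < (stage O (i + 1)).2, k ∈ X O ↔ k ∈ S := fun k hk =>
    (mem_X_iff O hk).trans List.mem_toFinset.symm
  -- Below `2 * K` and below the new floor, `W n` and `W m` are read off the finite list `S`.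
  have hmaps : ∀ x ∈ wFinset S n, f x ∈ wFinset S m := by
    intro x hx
    rw [mem_wFinset] at hx ⊢
    have hxK : x < 2 * K := by
      have := lt_height_of_mem_stage_succ O (List.mem_toFinset.1 hx.1)
      omega
    have hfx : f x < (stage O (i + 1)).2 := hfloor ▸ (he _ x hxK).trans_le (le_max_right _ _)
    have hKfl : K ≤ (stage O (i + 1)).2 := hfloor ▸ le_max_left _ _
    rw [← mem_W_iff_of_lt hX (by omega)] at hx ⊢
    exact (hred x).1 hx
  have hcard := Finset.card_le_card_of_injOn f hmaps hinj.injOn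
  rw [card_wFinset, card_wFinset] at hcard
  omega

end Stage

theorem primrec_block : Primrec fun p : ℕ × ℕ × ℕ => block p.1 p.2.1 p.2.2 :=
  Primrec.list_map (Primrec.list_range.comp (Primrec.snd.comp .snd)) <|
    Primrec₂.natPair.comp (Primrec.fst.comp (Primrec.snd.comp .fst))
      (Primrec.nat_add.comp (Primrec.fst.comp .fst) .snd)

theorem primrec_step {approx : ℕ → ℕ → ℕ → ℕ}
    (happrox : Primrec fun p : ℕ × ℕ × ℕ => approx p.1 p.2.1 p.2.2) :
    Primrec₂ fun (s : ℕ) (p : ℕ × (List ℕ × ℕ)) => step (approx s) p.1 p.2 := by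
  have hi : Primrec fun a : ℕ × ℕ × (List ℕ × ℕ) => a.2.1 := Primrec.fst.comp .snd
  have hL : Primrec fun a : ℕ × ℕ × (List ℕ × ℕ) => a.2.2.1 :=
    Primrec.fst.comp (Primrec.snd.comp .snd)
  have hfl : Primrec fun a : ℕ × ℕ × (List ℕ × ℕ) => a.2.2.2 :=
    Primrec.snd.comp (Primrec.snd.comp .snd)
  have hn : Primrec fun a : ℕ × ℕ × (List ℕ × ℕ) => a.2.1.unpair.2.unpair.1 :=
    Primrec.fst.comp (Primrec.unpair.comp (Primrec.snd.comp (Primrec.unpair.comp hi)))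
  have ht : Primrec fun a : ℕ × ℕ × (List ℕ × ℕ) => a.2.2.1.length + 1 :=
    Primrec.succ.comp (Primrec.list_length.comp hL)
  have hh : Primrec fun a : ℕ × ℕ × (List ℕ × ℕ) => height a.2.1 a.2.2 :=
    Primrec₂.natPair.comp hn (Primrec.nat_add.comp hfl ht)
  exact Primrec.pair
    (Primrec.list_append.comp hL <| primrec_block.comp <| Primrec.pair hfl <| Primrec.pair hn ht)
    (Primrec.nat_max.comp hh <| happrox.comp <| Primrec.pair .fst <|
      Primrec.pair (Primrec.fst.comp (Primrec.unpair.comp hi)) (Primrec.nat_mul.comp (.const 2) hh))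

theorem primrec_stage {approx : ℕ → ℕ → ℕ → ℕ}
    (happrox : Primrec fun p : ℕ × ℕ × ℕ => approx p.1 p.2.1 p.2.2) :
    Primrec₂ fun s i => stage (approx s) i := by
  refine (Primrec.nat_rec (Primrec.const ([], 0)) (primrec_step happrox)).of_eq fun s i => ?_
  induction i with
  | zero => rfl
  | succ i ih => simp only [stage, ← ih]

theorem eventually_stage_eq {approx : ℕ → ℕ → ℕ → ℕ} {O : ℕ → ℕ → ℕ}
    (hlim : ∀ e b, ∀ᶠ s in atTop, approx s e b = O e b) (i : ℕ) :
    ∀ᶠ s in atTop, stage (approx s) i = stage O i := by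
  induction i with
  | zero => exact .of_forall fun _ => rfl
  | succ i ih =>
    filter_upwards [ih, hlim i.unpair.1 (2 * height i (stage O i))] with s hs hs'
    simp only [stage, step, hs, hs']

theorem limitComputable_A {approx : ℕ → ℕ → ℕ → ℕ} {O : ℕ → ℕ → ℕ}
    (happrox : Primrec fun p : ℕ × ℕ × ℕ => approx p.1 p.2.1 p.2.2)
    (hlim : ∀ e b, ∀ᶠ s in atTop, approx s e b = O e b) : LimitComputable (A (X O)) := by
  have hmem : PrimrecRel fun (L : List ℕ) (k : ℕ) => k ∈ L :=
    (PrimrecRel.exists_mem_list Primrec.eq).of_eq fun L k => by simp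
  have hhalf : Primrec fun x : ℕ => x / 2 := Primrec.nat_div.comp .id (.const 2)
  have hdecide : PrimrecRel fun (s x : ℕ) =>
      x % 2 = 0 ∧ x / 2 ∈ (stage (approx s) (x / 2 + 1)).1 :=
    (primrecPred_even.comp Primrec.snd).and <| hmem.comp
      (Primrec.fst.comp <| (primrec_stage happrox).comp .fst (Primrec.succ.comp (hhalf.comp .snd)))
      (hhalf.comp .snd)
  refine ⟨fun s x => decide (x % 2 = 0 ∧ x / 2 ∈ (stage (approx s) (x / 2 + 1)).1),
    hdecide.decide.to_comp, fun x => ?_⟩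
  obtain ⟨s₀, hs₀⟩ := eventually_atTop.1 (eventually_stage_eq hlim (x / 2 + 1))
  refine ⟨s₀, fun s hs => ?_⟩
  rw [decide_eq_true_iff, hs₀ s hs, ← mem_X_iff_mem_stage_succ]
  rfl

def approxBound (s e b : ℕ) : ℕ :=
  ((List.range b).map fun x => (evaln s (Denumerable.ofNat Code e) x).getD 0).sum + 1

open Classical in
noncomputable def bound (e b : ℕ) : ℕ :=
  ((List.range b).map fun x => (eval (Denumerable.ofNat Code e) x).getOrElse 0).sum + 1

theorem eventually_evaln_getD (c : Code) (x : ℕ) [Decidable (eval c x).Dom] :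
    ∀ᶠ s in atTop, (evaln s c x).getD 0 = (eval c x).getOrElse 0 := by
  by_cases h : (eval c x).Dom
  · obtain ⟨k, hk⟩ := evaln_complete.1 (Part.get_mem h)
    filter_upwards [eventually_ge_atTop k] with s hs
    rw [Option.mem_def.1 (evaln_mono hs hk), Part.getOrElse_of_dom _ h]
    rfl
  · refine Eventually.of_forall fun s => ?_
    rw [Part.getOrElse_of_not_dom _ h]
    cases hs : evaln s c x with
    | none => rfl
    | some y => exact absurd (Part.dom_iff_mem.2 ⟨y, evaln_sound hs⟩) h

theorem eventually_approxBound_eq (e b : ℕ) :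
    ∀ᶠ s in atTop, approxBound s e b = bound e b := by
  classical
  filter_upwards [(eventually_all_finset (Finset.range b)).2
    fun x _ => eventually_evaln_getD (Denumerable.ofNat Code e) x] with s hs
  rw [approxBound, bound, List.map_congr_left fun x hx => hs x (by simpa using hx)]

theorem exists_lt_bound_of_computable {f : ℕ → ℕ} (hf : Computable f) :
    ∃ e, ∀ b, ∀ x < b, f x < bound e b := by
  classical
  obtain ⟨c, hc⟩ := exists_code.1 (Partrec.nat_iff.1 hf)
  refine ⟨Encodable.encode c, fun b x hx => Nat.lt_succ_of_le ?_⟩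
  have hval : (eval c x).getOrElse 0 = f x := by
    rw [hc]
    exact Part.getOrElse_of_dom _ trivial _
  refine List.le_sum_of_mem (List.mem_map.2 ⟨x, List.mem_range.2 hx, ?_⟩)
  rw [Denumerable.ofNat_encode]
  convert hval

theorem primrec_approxBound : Primrec fun p : ℕ × ℕ × ℕ => approxBound p.1 p.2.1 p.2.2 := by
  have hcode : Primrec fun p : ℕ × ℕ × ℕ => Denumerable.ofNat Code p.2.1 :=
    (Primrec.ofNat Code).comp (Primrec.fst.comp .snd)
  have hval : Primrec₂ fun (p : ℕ × ℕ × ℕ) (x : ℕ) =>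
      (evaln p.1 (Denumerable.ofNat Code p.2.1) x).getD 0 :=
    Primrec.option_getD.comp (primrec_evaln.comp
      (Primrec.pair (Primrec.pair (Primrec.fst.comp .fst) (hcode.comp .fst)) .snd)) (.const 0)
  exact Primrec.succ.comp <| primrec_list_sum.comp <|
    Primrec.list_map (Primrec.list_range.comp (Primrec.snd.comp .snd)) hval

end OscillatingProfiles

/-- **Oscillating profiles corollary.**  There exist a limit computable set `A`
and sets `W_0, W_1, …` with `W_n ≡_bfo A` for every `n` and `¬ W_n ≤₁ W_m`
whenever `n ≠ m`; so the `deg₁(W_n)` form an infinite antichain of 1-degrees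
inside a single bounded finite-one degree. -/
theorem oscillating_profiles :
    ∃ (A : Set ℕ) (W : ℕ → Set ℕ),
      LimitComputable A ∧
      (∀ n, BfoEquiv (W n) A) ∧
      (∀ n m, n ≠ m → ¬ OneOneRed (W n) (W m)) := by
  open OscillatingProfiles in
  exact ⟨A (X bound), W (X bound),
    limitComputable_A primrec_approxBound eventually_approxBound_eq,
    fun n => ⟨bfoRed_W_A _ n, bfoRed_A_W _ n⟩,
    fun _ _ => not_oneOneRed_W bound fun _ => exists_lt_bound_of_computable⟩
end

section
/- One degree containing both structures. There exist a nonrecursive limit computable set A ⊆ ℕ, a family {B_q}_{q ∈ ℚ ∩ (1,2)} of subsets of ℕ, and a family {W_n}_{n ∈ ℕ} of subsets of ℕ such that: (i) B_q ≡_bfo A for every q ∈ ℚ ∩ (1,2); (ii) W_n ≡_bfo A for every n ∈ ℕ; (iii) B_p <₁ B_q whenever p, q ∈ ℚ ∩ (1,2) and p < q; (iv) ¬(W_n ≤₁ W_m) whenever n ≠ m. Consequently, the bounded finite-one degree of A contains both a copy of (ℚ, ≤) and an infinite antichain of 1-degrees. -/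
/-!
Let `A` consist of one copy `⟨k, 0⟩` of each point `k` of a set `D`, and let `B q` and `W n` have
two copies `⟨k, 0⟩, ⟨k, 1⟩` of the points `k ∈ D` of some columns (the columns `e` with
`ratOf e < q` for an enumeration `ratOf` of `ℚ≥0`, resp. the column `n`) and one copy of the
others. Collapsing the copies of a point is a bounded finite-one reduction, so all these sets are
bfo-equivalent to `A`, and adding copies is a one-one reduction. Conversely, a one-one reduction
from a set with two copies of `k` to one with a single copy must send one of them to a different
column, which yields a computable map that preserves membership in `D` and moves `k`.

So it suffices to build a `Δ⁰₂` set `D` with infinite columns that is computably rigid: every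
computable map preserving membership in `D` fixes almost all of its points. This is a
finite-extension construction relative to `∅'`: for each code `e` it looks for an input `k` beyond
the part built so far that `e` moves, and makes `k` and its image disagree. Rigidity also makes
`D`, hence `A`, noncomputable.
-/

theorem OneOneRed.bfoRed {B C : Set ℕ} (h : OneOneRed B C) : BfoRed B C := by
  obtain ⟨f, hf, hinj, hmem⟩ := h
  refine ⟨f, hf, ⟨1, le_rfl, fun y => ?_⟩, hmem⟩
  exact_mod_cast Set.encard_le_one_iff.2 fun a b (ha : f a = y) (hb : f b = y) =>
    hinj (ha.trans hb.symm)

theorem Computable.decide_lt {α : Type*} [Primcodable α] {f g : α → ℕ} (hf : Computable f)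
    (hg : Computable g) : Computable fun a => decide (f a < g a) :=
  Primrec.nat_lt.decide.to_comp.comp hf hg

theorem Computable.unpair_fst {α : Type*} [Primcodable α] {f : α → ℕ} (hf : Computable f) :
    Computable fun a => (f a).unpair.1 :=
  Computable.fst.comp (Computable.unpair.comp hf)

theorem Computable.unpair_snd {α : Type*} [Primcodable α] {f : α → ℕ} (hf : Computable f) :
    Computable fun a => (f a).unpair.2 :=
  Computable.snd.comp (Computable.unpair.comp hf)

theorem Computable.natPair {α : Type*} [Primcodable α] {f g : α → ℕ} (hf : Computable f)
    (hg : Computable g) : Computable fun a => Nat.pair (f a) (g a) :=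
  Primrec₂.natPair.to_comp.comp hf hg

def copies (D : Set ℕ) (β : ℕ → ℕ) : Set ℕ :=
  {x | x.unpair.1 ∈ D ∧ x.unpair.2 < β x.unpair.1}

section copies

variable {D : Set ℕ} {β γ : ℕ → ℕ}

@[simp]
theorem pair_mem_copies {k i : ℕ} : Nat.pair k i ∈ copies D β ↔ k ∈ D ∧ i < β k := by
  simp [copies]

theorem mem_copies_iff_of_lt {x : ℕ} (h : x.unpair.2 < β x.unpair.1) :
    x ∈ copies D β ↔ x.unpair.1 ∈ D := by
  simp [copies, h]

theorem oneOneRed_copies_of_le (hβ : Computable β) (hγ : Computable γ) (hle : ∀ k, β k ≤ γ k) :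
    OneOneRed (copies D β) (copies D γ) := by
  set shift : ℕ → ℕ → ℕ := fun k i => if i < β k then i else i + (γ k - β k) with hshift
  have shift_lt_iff : ∀ k i, shift k i < γ k ↔ i < β k := by
    intro k i; have := hle k; simp only [hshift]; split_ifs <;> omega
  have shift_inj : ∀ k, Function.Injective (shift k) := by
    intro k i j hij; have := hle k; simp only [hshift] at hij; split_ifs at hij <;> omega
  refine ⟨fun x => Nat.pair x.unpair.1 (shift x.unpair.1 x.unpair.2), ?_, ?_, fun x => ?_⟩
  · have hk := Computable.unpair_fst Computable.id
    have hi := Computable.unpair_snd Computable.id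
    refine Computable.natPair hk ((Computable.cond (hi.decide_lt (hβ.comp hk)) hi
      (Primrec.nat_add.to_comp.comp hi
        (Primrec.nat_sub.to_comp.comp (hγ.comp hk) (hβ.comp hk)))).of_eq fun x => ?_)
    by_cases h : x.unpair.2 < β x.unpair.1 <;> simp [hshift, h]
  · intro x y hxy
    obtain ⟨hk, hi⟩ := Nat.pair_eq_pair.1 hxy
    rw [hk] at hi
    exact Nat.pairEquiv.symm.injective (Prod.ext hk (shift_inj _ hi))
  · conv_rhs => rw [← Nat.pair_unpair x]
    simp [copies, shift_lt_iff]

theorem bfoRed_copies_one {c : ℕ} (hβ : Computable β) (h1 : ∀ k, 1 ≤ β k) (hc : ∀ k, β k ≤ c) :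
    BfoRed (copies D β) (copies D 1) := by
  refine ⟨fun x => if x.unpair.2 < β x.unpair.1 then Nat.pair x.unpair.1 0 else x, ?_,
    ⟨c + 1, by omega, fun y => ?_⟩, fun x => ?_⟩
  · have hk := Computable.unpair_fst Computable.id
    exact (Computable.cond ((Computable.unpair_snd Computable.id).decide_lt (hβ.comp hk))
      (Computable.natPair hk (Computable.const 0)) Computable.id).of_eq fun x => by
        by_cases h : x.unpair.2 < β x.unpair.1 <;> simp [h]
  · calc {x | (if x.unpair.2 < β x.unpair.1 then Nat.pair x.unpair.1 0 else x) = y}.encard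
        ≤ (↑(insert y ((Finset.range c).image (Nat.pair y.unpair.1))) : Set ℕ).encard := by
          refine Set.encard_mono fun x hx => ?_
          change (if _ then _ else _) = y at hx
          split_ifs at hx with h
          · subst hx
            have := hc x.unpair.1
            simp only [Nat.unpair_pair, Finset.coe_insert, Finset.coe_image, Finset.coe_range,
              Set.mem_insert_iff, Set.mem_image, Set.mem_Iio]
            exact Or.inr ⟨x.unpair.2, by omega, Nat.pair_unpair x⟩
          · simp [hx]
      _ ≤ (c + 1 : ℕ) := by
          rw [Set.encard_coe_eq_coe_finsetCard]
          exact_mod_cast (Finset.card_insert_le _ _).trans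
            (by simpa using Finset.card_image_le (s := Finset.range c))
  · have := h1 x.unpair.1
    dsimp only
    split_ifs with h
    · simp [copies, h]
    · simp only [copies, Set.mem_ofPred_eq, Pi.one_apply]
      omega

theorem bfoEquiv_copies_one {c : ℕ} (hβ : Computable β) (h1 : ∀ k, 1 ≤ β k)
    (hc : ∀ k, β k ≤ c) : BfoEquiv (copies D β) (copies D 1) :=
  ⟨bfoRed_copies_one hβ h1 hc, (oneOneRed_copies_of_le (Computable.const 1) hβ h1).bfoRed⟩

theorem LimitComputable.copies (hD : LimitComputable D) (hβ : Computable β) :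
    LimitComputable (copies D β) := by
  obtain ⟨g, hg, hlim⟩ := hD
  refine ⟨fun s x => g s x.unpair.1 && decide (x.unpair.2 < β x.unpair.1),
    Primrec.and.to_comp.comp (hg.comp Computable.fst (Computable.unpair_fst Computable.snd))
      ((Computable.unpair_snd Computable.snd).decide_lt
        (hβ.comp (Computable.unpair_fst Computable.snd))), fun x => ?_⟩
  obtain ⟨s₀, hs₀⟩ := hlim x.unpair.1
  exact ⟨s₀, fun s hs => by simp [_root_.copies, hs₀ s hs]⟩

theorem computablePred_of_copies (h : ComputablePred (· ∈ copies D β)) (h1 : ∀ k, 1 ≤ β k) :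
    ComputablePred (· ∈ D) :=
  ComputablePred.computable_of_manyOneReducible
    ⟨fun k => Nat.pair k 0, Computable.natPair Computable.id (Computable.const 0),
      fun k => by rw [pair_mem_copies]; exact ⟨fun hk => ⟨hk, h1 k⟩, And.left⟩⟩ h

end copies

def ComputablyRigid (D : Set ℕ) : Prop :=
  ∀ h : ℕ → ℕ, Computable h → (∀ k, h k ∈ D ↔ k ∈ D) → {k | k ∈ D ∧ h k ≠ k}.Finite

namespace ComputablyRigid

variable {D : Set ℕ}

theorem not_computablePred (hD : ComputablyRigid D) (hinf : D.Infinite) :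
    ¬ ComputablePred (· ∈ D) := by
  rintro ⟨_, hc⟩
  obtain ⟨d, hd⟩ := hinf.nonempty
  -- collapsing `D` onto one of its points would be a computable, membership-preserving map
  have hfin := hD (fun k => if k ∈ D then d else k)
    ((Computable.cond hc (Computable.const d) Computable.id).of_eq fun k => by
      by_cases hk : k ∈ D <;> simp [hk])
    (fun k => by by_cases hk : k ∈ D <;> simp [hk, hd])
  refine hinf ((hfin.insert d).subset fun k hk => ?_)
  by_cases hkd : k = d
  · exact Or.inl hkd
  · exact Or.inr ⟨hk, by simpa [hk] using Ne.symm hkd⟩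

end ComputablyRigid

section reroute

variable {D : Set ℕ} {β γ f : ℕ → ℕ}

/-- The `i`-th copy of `k` is sent by `f` out of column `k`, to a point whose membership in
`copies D γ` is decided by its column alone. -/
def leavesColumn (β γ f : ℕ → ℕ) (i k : ℕ) : Bool :=
  decide (i < β k) && decide ((f (Nat.pair k i)).unpair.2 < γ (f (Nat.pair k i)).unpair.1) &&
    !decide ((f (Nat.pair k i)).unpair.1 = k)

def reroute (β γ f : ℕ → ℕ) (k : ℕ) : ℕ :=
  bif leavesColumn β γ f 0 k then (f (Nat.pair k 0)).unpair.1
  else bif leavesColumn β γ f 1 k then (f (Nat.pair k 1)).unpair.1 else k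

theorem computable_reroute (hβ : Computable β) (hγ : Computable γ) (hf : Computable f) :
    Computable (reroute β γ f) := by
  have hfi : ∀ i, Computable fun k => f (Nat.pair k i) := fun i =>
    hf.comp (Computable.natPair Computable.id (Computable.const i))
  have hleaves : ∀ i, Computable (leavesColumn β γ f i) := fun i =>
    Primrec.and.to_comp.comp (Primrec.and.to_comp.comp ((Computable.const i).decide_lt hβ)
      ((hfi i).unpair_snd.decide_lt (hγ.comp (hfi i).unpair_fst)))
      (Primrec.not.to_comp.comp (Primrec.eq.decide.to_comp.comp (hfi i).unpair_fst
        Computable.id))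
  exact Computable.cond (hleaves 0) (hfi 0).unpair_fst
    (Computable.cond (hleaves 1) (hfi 1).unpair_fst Computable.id)

theorem mem_iff_of_leavesColumn (hmem : ∀ x, x ∈ copies D β ↔ f x ∈ copies D γ) {i k : ℕ}
    (h : leavesColumn β γ f i k = true) :
    ((f (Nat.pair k i)).unpair.1 ∈ D ↔ k ∈ D) ∧ (f (Nat.pair k i)).unpair.1 ≠ k := by
  simp only [leavesColumn, Bool.and_eq_true, decide_eq_true_eq, Bool.not_eq_true',
    decide_eq_false_iff_not] at h
  obtain ⟨⟨hi, hlt⟩, hne⟩ := h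
  refine ⟨?_, hne⟩
  rw [← mem_copies_iff_of_lt hlt, ← hmem, pair_mem_copies]
  exact ⟨fun h => h.1, fun h => ⟨h, hi⟩⟩

theorem reroute_mem_iff (hmem : ∀ x, x ∈ copies D β ↔ f x ∈ copies D γ) (k : ℕ) :
    reroute β γ f k ∈ D ↔ k ∈ D := by
  cases h0 : leavesColumn β γ f 0 k
  · cases h1 : leavesColumn β γ f 1 k
    · simp [reroute, h0, h1]
    · simpa [reroute, h0, h1] using (mem_iff_of_leavesColumn hmem h1).1
  · simpa [reroute, h0] using (mem_iff_of_leavesColumn hmem h0).1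

theorem eq_pair_zero_of_not_leavesColumn (hmem : ∀ x, x ∈ copies D β ↔ f x ∈ copies D γ)
    (hβ2 : ∀ k, β k ≤ 2) {i k : ℕ} (hk : k ∈ D) (hlt : γ k < β k) (hi : i < β k)
    (h : leavesColumn β γ f i k = false) :
    f (Nat.pair k i) = Nat.pair k 0 ∧ γ k = 1 := by
  obtain ⟨-, hoff⟩ : (f (Nat.pair k i)).unpair.1 ∈ D ∧
      (f (Nat.pair k i)).unpair.2 < γ (f (Nat.pair k i)).unpair.1 :=
    (hmem _).1 (pair_mem_copies.2 ⟨hk, hi⟩)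
  have hself : (f (Nat.pair k i)).unpair.1 = k := by simpa [leavesColumn, hi, hoff] using h
  rw [hself] at hoff
  have := hβ2 k
  refine ⟨?_, by omega⟩
  rw [← Nat.pair_unpair (f _), hself, show (f (Nat.pair k i)).unpair.2 = 0 by omega]

theorem reroute_ne (hmem : ∀ x, x ∈ copies D β ↔ f x ∈ copies D γ)
    (hinj : Function.Injective f) (hβ2 : ∀ k, β k ≤ 2) {k : ℕ} (hk : k ∈ D)
    (hlt : γ k < β k) : reroute β γ f k ≠ k := by
  cases h0 : leavesColumn β γ f 0 k
  · cases h1 : leavesColumn β γ f 1 k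
    · -- otherwise both copies of `k` would be sent to `⟨k, 0⟩`
      obtain ⟨hf0, hγ1⟩ := eq_pair_zero_of_not_leavesColumn hmem hβ2 hk hlt (by omega) h0
      have hf1 := (eq_pair_zero_of_not_leavesColumn hmem hβ2 hk hlt
        (by have := hβ2 k; omega) h1).1
      exact absurd (hinj (hf0.trans hf1.symm)) (by simp [Nat.pair_eq_pair])
    · simpa [reroute, h0, h1] using (mem_iff_of_leavesColumn hmem h1).2
  · simpa [reroute, h0] using (mem_iff_of_leavesColumn hmem h0).2

end reroute

theorem ComputablyRigid.not_oneOneRed_copies {D : Set ℕ} {β γ : ℕ → ℕ} (hD : ComputablyRigid D)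
    (hβ : Computable β) (hγ : Computable γ) (hβ2 : ∀ k, β k ≤ 2)
    (hinf : {k | k ∈ D ∧ γ k < β k}.Infinite) : ¬ OneOneRed (copies D β) (copies D γ) := by
  rintro ⟨f, hf, hinj, hmem⟩
  exact hinf ((hD _ (computable_reroute hβ hγ hf) (reroute_mem_iff hmem)).subset
    fun k hk => ⟨hk.1, reroute_ne hmem hinj hβ2 hk.1 hk.2⟩)

def oneOrTwo (χ : ℕ → Bool) (k : ℕ) : ℕ := bif χ k.unpair.1 then 2 else 1

section oneOrTwo

variable {D : Set ℕ} {χ χ' : ℕ → Bool}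

theorem computable_oneOrTwo (hχ : Computable χ) : Computable (oneOrTwo χ) :=
  Computable.cond (hχ.comp (Computable.unpair_fst Computable.id)) (Computable.const 2)
    (Computable.const 1)

theorem one_le_oneOrTwo (k : ℕ) : 1 ≤ oneOrTwo χ k := by
  unfold oneOrTwo; cases χ k.unpair.1 <;> simp

theorem oneOrTwo_le_two (k : ℕ) : oneOrTwo χ k ≤ 2 := by
  unfold oneOrTwo; cases χ k.unpair.1 <;> simp

theorem bfoEquiv_copies_oneOrTwo (hχ : Computable χ) :
    BfoEquiv (copies D (oneOrTwo χ)) (copies D 1) :=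
  bfoEquiv_copies_one (computable_oneOrTwo hχ) one_le_oneOrTwo oneOrTwo_le_two

theorem oneOneRed_copies_oneOrTwo (hχ : Computable χ) (hχ' : Computable χ')
    (hle : ∀ e, χ e = true → χ' e = true) :
    OneOneRed (copies D (oneOrTwo χ)) (copies D (oneOrTwo χ')) :=
  oneOneRed_copies_of_le (computable_oneOrTwo hχ) (computable_oneOrTwo hχ') fun k => by
    unfold oneOrTwo
    cases h : χ k.unpair.1
    · cases χ' k.unpair.1 <;> simp
    · simp [hle _ h]

theorem ComputablyRigid.not_oneOneRed_copies_oneOrTwo (hD : ComputablyRigid D) {e : ℕ}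
    (hcol : {k | k ∈ D ∧ k.unpair.1 = e}.Infinite) (hχ : Computable χ) (hχ' : Computable χ')
    (he : χ e = false) (he' : χ' e = true) :
    ¬ OneOneRed (copies D (oneOrTwo χ')) (copies D (oneOrTwo χ)) :=
  hD.not_oneOneRed_copies (computable_oneOrTwo hχ') (computable_oneOrTwo hχ) oneOrTwo_le_two
    (hcol.mono fun k hk => ⟨hk.1, by simp [oneOrTwo, hk.2, he, he']⟩)

end oneOrTwo

def ratOf (e : ℕ) : ℚ := e.unpair.1 / (e.unpair.2 + 1)

theorem ratOf_lt_iff (e : ℕ) (q : ℚ) :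
    ratOf e < q ↔ e.unpair.1 * q.den < q.num.toNat * (e.unpair.2 + 1) := by
  have hden : (0 : ℚ) < q.den := by positivity
  rw [ratOf, div_lt_iff₀ (by positivity), ← mul_lt_mul_iff_of_pos_right hden, mul_right_comm,
    Rat.mul_den_eq_num]
  rcases le_or_gt 0 q.num with h | h
  · lift q.num to ℕ using h with m
    simp only [Int.toNat_natCast]
    exact_mod_cast Iff.rfl
  · have : q.num.toNat = 0 := by omega
    simp only [this, zero_mul, Nat.not_lt_zero, iff_false, not_lt]
    have : (q.num : ℚ) < 0 := by exact_mod_cast h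
    nlinarith

theorem computable_ratOf_lt (q : ℚ) : Computable fun e => decide (ratOf e < q) :=
  have ha := Computable.unpair_fst Computable.id
  have hb := Computable.unpair_snd Computable.id
  ((Primrec.nat_mul.to_comp.comp ha (Computable.const q.den)).decide_lt
    (Primrec.nat_mul.to_comp.comp (Computable.const q.num.toNat) (Computable.succ.comp hb))).of_eq
    fun e => by simp [ratOf_lt_iff]

theorem exists_ratOf_eq {p : ℚ} (hp : 0 ≤ p) : ∃ e, ratOf e = p := by
  refine ⟨Nat.pair p.num.toNat (p.den - 1), ?_⟩
  have hnum : ((p.num.toNat : ℕ) : ℚ) = p.num := by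
    exact_mod_cast Int.toNat_of_nonneg (Rat.num_nonneg.2 hp)
  rw [ratOf, Nat.unpair_pair, hnum, Nat.cast_pred p.den_pos, sub_add_cancel, Rat.num_div_den]

section extendAt

theorem List.IsPrefix.getD_eq {α : Type*} {l l' : List α} (h : l <+: l') (d : α) {i : ℕ}
    (hi : i < l.length) : l'.getD i d = l.getD i d := by
  obtain ⟨t, rfl⟩ := h
  exact List.getD_append _ _ _ _ hi

@[simp]
theorem List.getD_rightpad {α : Type*} (l : List α) (d : α) (n i : ℕ) :
    (l.rightpad n d).getD i d = l.getD i d := by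
  simp only [List.rightpad, List.getD_eq_getElem?_getD, List.getElem?_append,
    List.getElem?_replicate]
  split_ifs <;> simp_all

variable {σ : List Bool}

def extendAt (σ : List Bool) (p : ℕ) (v : Bool) : List Bool := σ.rightpad p false ++ [v]

theorem prefix_extendAt (p : ℕ) (v : Bool) : σ <+: extendAt σ p v :=
  (List.prefix_append _ _).trans (List.prefix_append _ _)

theorem length_extendAt {p : ℕ} (v : Bool) (hp : σ.length ≤ p) :
    (extendAt σ p v).length = p + 1 := by
  rw [extendAt, List.length_append, List.length_rightpad, max_eq_left hp, List.length_singleton]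

theorem getD_extendAt {p : ℕ} (v : Bool) (hp : σ.length ≤ p) (i : ℕ) :
    (extendAt σ p v).getD i false = if i = p then v else σ.getD i false := by
  have hlen : (σ.rightpad p false).length = p := by rw [List.length_rightpad, max_eq_left hp]
  rcases lt_trichotomy i p with hi | rfl | hi
  · rw [extendAt, List.getD_append _ _ _ _ (hlen.symm ▸ hi), List.getD_rightpad, if_neg hi.ne]
  · rw [extendAt, List.getD_append_right _ _ _ _ hlen.le, hlen, Nat.sub_self, if_pos rfl]
    rfl
  · rw [if_neg hi.ne', List.getD_eq_default _ _ (by rw [length_extendAt v hp]; omega),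
      List.getD_eq_default _ _ (by omega)]

end extendAt

open Nat.Partrec (Code)
open Nat.Partrec.Code

namespace RigidSet

/-- The output of code `e` on input `k` after `t` steps, where `n = ⟨k, t⟩`; a computation that
has not yet halted reads as `k`, so it never counts as moving `k`. -/
def output (e n : ℕ) : ℕ :=
  (evaln n.unpair.2 (Denumerable.ofNat Code e) n.unpair.1).getD n.unpair.1

def isWitness (e L n : ℕ) : Bool :=
  decide (L ≤ n.unpair.1) && decide (output e n ≠ n.unpair.1)

open Classical in
noncomputable def firstWitness (e L : ℕ) : Option ℕ :=
  if h : ∃ n, isWitness e L n then some (Nat.find h) else none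

def firstWitnessBelow (b e L : ℕ) : Option ℕ := (List.range b).find? (isWitness e L)

theorem firstWitnessBelow_eventually_eq (e L : ℕ) :
    ∃ b₀, ∀ b, b₀ ≤ b → firstWitnessBelow b e L = firstWitness e L := by
  classical
  by_cases h : ∃ n, isWitness e L n
  · refine ⟨Nat.find h + 1, fun b hb => ?_⟩
    rw [firstWitness, dif_pos h, firstWitnessBelow, List.find?_range_eq_some]
    exact ⟨Nat.find_spec h, List.mem_range.2 (by omega),
      fun j hj => by simpa using Nat.find_min h hj⟩
  · refine ⟨0, fun b _ => ?_⟩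
    rw [firstWitness, dif_neg h, firstWitnessBelow, List.find?_eq_none]
    exact fun n _ hn => h ⟨n, hn⟩

def mark (s : ℕ) (σ : List Bool) : List Bool := extendAt σ (Nat.pair s.unpair.1 σ.length) true

/-- Makes `k = n.unpair.1` disagree with its image `w = output e n`; padding past `w` fixes the
value of `w` as well. -/
def diagonalize (e : ℕ) (τ : List Bool) (n : ℕ) : List Bool :=
  (extendAt τ n.unpair.1 (!τ.getD (output e n) false)).rightpad (output e n + 1) false

/-- Stage `s` serves code `s.unpair.1`, so every code is served infinitely often. The true
search `F = firstWitness` defines the set; the bounded searches `F = firstWitnessBelow b`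
approximate it. -/
def stage (F : ℕ → ℕ → Option ℕ) (s : ℕ) (σ : List Bool) : List Bool :=
  (F s.unpair.1 (mark s σ).length).elim (mark s σ) (diagonalize s.unpair.1 (mark s σ))

def run (F : ℕ → ℕ → Option ℕ) : ℕ → List Bool
  | 0 => []
  | s + 1 => stage F s (run F s)

end RigidSet

open RigidSet in
def rigidSet : Set ℕ := {n | (run firstWitness (n + 1)).getD n false = true}

namespace RigidSet

variable {F : ℕ → ℕ → Option ℕ}

theorem length_mark (s : ℕ) (σ : List Bool) :
    (mark s σ).length = Nat.pair s.unpair.1 σ.length + 1 :=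
  length_extendAt _ (Nat.right_le_pair _ _)

theorem mark_prefix_stage (s : ℕ) (σ : List Bool) : mark s σ <+: stage F s σ := by
  unfold stage
  cases F s.unpair.1 (mark s σ).length with
  | none => exact List.prefix_refl _
  | some n => exact (prefix_extendAt _ _).trans (List.prefix_append _ _)

theorem prefix_stage (s : ℕ) (σ : List Bool) : σ <+: stage F s σ :=
  (prefix_extendAt _ _).trans (mark_prefix_stage s σ)

theorem le_length_run (s : ℕ) : s ≤ (run F s).length := by
  induction s with
  | zero => exact Nat.zero_le _
  | succ s ih =>
    have := (mark_prefix_stage (F := F) s (run F s)).length_le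
    have := Nat.right_le_pair s.unpair.1 (run F s).length
    rw [length_mark] at *
    change s + 1 ≤ (stage F s (run F s)).length
    omega

theorem run_prefix_of_le {s t : ℕ} (h : s ≤ t) : run F s <+: run F t := by
  induction t, h using Nat.le_induction with
  | base => exact List.prefix_refl _
  | succ t _ ih => exact ih.trans (prefix_stage t _)

theorem mem_rigidSet_iff {n s : ℕ} (h : n < (run firstWitness s).length) :
    n ∈ rigidSet ↔ (run firstWitness s).getD n false = true := by
  have hn : n < (run firstWitness (n + 1)).length := le_length_run (n + 1)
  change (run firstWitness (n + 1)).getD n false = true ↔ _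
  rw [← (run_prefix_of_le (le_max_right s (n + 1))).getD_eq false hn,
    (run_prefix_of_le (le_max_left s (n + 1))).getD_eq false h]

theorem mark_mem_rigidSet (s : ℕ) :
    Nat.pair s.unpair.1 (run firstWitness s).length ∈ rigidSet := by
  set σ := run firstWitness s
  have hmark := mark_prefix_stage (F := firstWitness) s σ
  have hlt : Nat.pair s.unpair.1 σ.length < (mark s σ).length := by rw [length_mark]; omega
  rw [mem_rigidSet_iff (s := s + 1) (lt_of_lt_of_le hlt hmark.length_le)]
  change (stage firstWitness s σ).getD _ false = true
  rw [hmark.getD_eq false hlt, mark, getD_extendAt _ (Nat.right_le_pair _ _), if_pos rfl]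

theorem infinite_column (e : ℕ) : {k | k ∈ rigidSet ∧ k.unpair.1 = e}.Infinite := by
  refine Set.infinite_of_forall_exists_gt fun N => ?_
  have hs : N < Nat.pair e (N + 1) :=
    Nat.lt_of_lt_of_le (Nat.lt_succ_self N) (Nat.right_le_pair _ _)
  refine ⟨_, ⟨mark_mem_rigidSet (Nat.pair e (N + 1)), by simp⟩, ?_⟩
  exact lt_of_lt_of_le hs ((le_length_run _).trans (Nat.right_le_pair _ _))

theorem infinite_rigidSet : rigidSet.Infinite :=
  (infinite_column 0).mono fun _ hk => hk.1

theorem isWitness_of_firstWitness_eq_some {e L n : ℕ} (h : firstWitness e L = some n) :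
    isWitness e L n = true := by
  classical
  unfold firstWitness at h
  split_ifs at h with hex
  exact Option.some.inj h ▸ Nat.find_spec hex

theorem not_isWitness_of_firstWitness_eq_none {e L : ℕ} (h : firstWitness e L = none) (n : ℕ) :
    isWitness e L n = false := by
  classical
  unfold firstWitness at h
  split_ifs at h with hex
  simpa using fun hn => hex ⟨n, hn⟩

theorem not_output_mem_rigidSet_iff {s n : ℕ}
    (h : firstWitness s.unpair.1 (mark s (run firstWitness s)).length = some n) :
    ¬ (output s.unpair.1 n ∈ rigidSet ↔ n.unpair.1 ∈ rigidSet) := by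
  set τ := mark s (run firstWitness s)
  set w := output s.unpair.1 n
  set k := n.unpair.1
  have hwit := isWitness_of_firstWitness_eq_some h
  simp only [isWitness, Bool.and_eq_true, decide_eq_true_eq] at hwit
  obtain ⟨hτk, hwk⟩ := hwit
  have hrun : run firstWitness (s + 1) = diagonalize s.unpair.1 τ n := by
    change stage firstWitness s _ = _
    rw [stage, h]
    rfl
  have hlen : (run firstWitness (s + 1)).length = max (w + 1) (k + 1) := by
    rw [hrun, diagonalize, List.length_rightpad, length_extendAt _ hτk]
  have hval : ∀ i, (run firstWitness (s + 1)).getD i false =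
      if i = k then !τ.getD w false else τ.getD i false := by
    intro i
    rw [hrun, diagonalize, List.getD_rightpad, getD_extendAt _ hτk]
  rw [mem_rigidSet_iff (s := s + 1) (by omega), mem_rigidSet_iff (s := s + 1) (by omega),
    hval, hval, if_neg hwk, if_pos rfl]
  cases τ.getD w false <;> simp

theorem output_eq_of_ne {c : Code} {h : ℕ → ℕ} (hc : eval c = fun k => Part.some (h k)) {n : ℕ}
    (hn : output (Encodable.encode c) n ≠ n.unpair.1) :
    output (Encodable.encode c) n = h n.unpair.1 := by
  unfold output at *
  rw [Denumerable.ofNat_encode] at *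
  cases hev : evaln n.unpair.2 c n.unpair.1 with
  | none => simp [hev] at hn
  | some w =>
    have := evaln_sound (Option.mem_def.2 hev)
    rw [hc] at this
    simpa using this

theorem exists_isWitness {c : Code} {h : ℕ → ℕ} (hc : eval c = fun k => Part.some (h k))
    {L k : ℕ} (hLk : L ≤ k) (hk : h k ≠ k) : ∃ n, isWitness (Encodable.encode c) L n = true := by
  obtain ⟨t, ht⟩ := evaln_complete.1 (show h k ∈ eval c k by simp [hc])
  refine ⟨Nat.pair k t, ?_⟩
  simp [isWitness, output, Option.mem_def.1 ht, hLk, hk]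

theorem computablyRigid : ComputablyRigid rigidSet := by
  intro h hh hpres
  obtain ⟨c, hc⟩ := exists_code.1 (Partrec.nat_iff.1 hh)
  set s := Nat.pair (Encodable.encode c) 0
  have hs : s.unpair.1 = Encodable.encode c := by simp [s]
  cases hF : firstWitness s.unpair.1 (mark s (run firstWitness s)).length with
  | some n =>
    have hne := isWitness_of_firstWitness_eq_some hF
    simp only [isWitness, Bool.and_eq_true, decide_eq_true_eq, hs] at hne
    refine absurd ?_ (not_output_mem_rigidSet_iff hF)
    rw [hs, output_eq_of_ne hc hne.2]
    exact hpres _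
  | none =>
    refine (Set.finite_lt_nat (mark s (run firstWitness s)).length).subset fun k hk => ?_
    by_contra hLk
    obtain ⟨n, hn⟩ := exists_isWitness hc (not_lt.1 hLk) hk.2
    rw [← hs, not_isWitness_of_firstWitness_eq_none hF] at hn
    exact Bool.false_ne_true hn

end RigidSet

theorem Primrec.list_find? {α β : Type*} [Primcodable α] [Primcodable β] {f : α → List β}
    {p : α → β → Bool} (hf : Primrec f) (hp : Primrec₂ p) :
    Primrec fun a => (f a).find? (p a) :=
  (list_getElem?.comp hf (list_findIdx hf hp)).of_eq fun _ => List.find?_eq_getElem?_findIdx.symm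

theorem Primrec.list_rightpad {α : Type*} [Primcodable α] (a : α) :
    Primrec₂ fun (l : List α) (n : ℕ) => l.rightpad n a :=
  (list_append.comp fst (list_map (list_range.comp (nat_sub.comp snd (list_length.comp fst)))
    (Primrec₂.const a))).of_eq fun _ => by simp [List.rightpad, List.map_const']

namespace RigidSet

open Primrec

theorem primrec_output : Primrec₂ output :=
  option_getD.comp
    (primrec_evaln.comp (((snd.comp (unpair.comp snd)).pair ((Primrec.ofNat Code).comp fst)).pair
      (fst.comp (unpair.comp snd))))
    (fst.comp (unpair.comp snd))

theorem primrec_isWitness : Primrec₂ fun (eL : ℕ × ℕ) (n : ℕ) => isWitness eL.1 eL.2 n :=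
  Primrec.and.comp (nat_le.decide.comp (snd.comp fst) (fst.comp (unpair.comp snd)))
    ((Primrec.not.comp (Primrec.eq.decide.comp (primrec_output.comp (fst.comp fst) snd)
      (fst.comp (unpair.comp snd)))).of_eq fun _ => by simp)

theorem primrec_firstWitnessBelow :
    Primrec fun x : ℕ × ℕ × ℕ => firstWitnessBelow x.1 x.2.1 x.2.2 :=
  Primrec.list_find? (list_range.comp fst) (primrec_isWitness.comp (snd.comp fst) snd)

theorem primrec_extendAt : Primrec fun x : List Bool × ℕ × Bool => extendAt x.1 x.2.1 x.2.2 :=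
  list_concat.comp ((list_rightpad false).comp fst (fst.comp snd)) (snd.comp snd)

theorem primrec_mark : Primrec₂ mark :=
  primrec_extendAt.comp (snd.pair ((Primrec₂.natPair.comp (fst.comp (unpair.comp fst))
    (list_length.comp snd)).pair (const true)))

theorem primrec_diagonalize :
    Primrec fun x : ℕ × List Bool × ℕ => diagonalize x.1 x.2.1 x.2.2 :=
  have hw := primrec_output.comp fst (snd.comp snd)
  (list_rightpad false).comp
    (primrec_extendAt.comp ((fst.comp snd).pair ((fst.comp (unpair.comp (snd.comp snd))).pair
      (Primrec.not.comp ((list_getD false).comp (fst.comp snd) hw)))))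
    (succ.comp hw)

theorem primrec_run : Primrec₂ fun b s => run (firstWitnessBelow b) s := by
  have hmark : Primrec fun x : ℕ × ℕ × List Bool => mark x.2.1 x.2.2 :=
    primrec_mark.comp (fst.comp snd) (snd.comp snd)
  have hstage : Primrec₂ fun (b : ℕ) (x : ℕ × List Bool) => stage (firstWitnessBelow b) x.1 x.2 :=
    (option_casesOn (primrec_firstWitnessBelow.comp (fst.pair ((fst.comp (unpair.comp
      (fst.comp snd))).pair (list_length.comp hmark)))) hmark
      (primrec_diagonalize.comp ((fst.comp (unpair.comp (fst.comp (snd.comp fst)))).pair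
        ((hmark.comp fst).pair snd))).to₂).of_eq fun x => by
      dsimp only [stage]; cases firstWitnessBelow _ _ _ <;> rfl
  refine (nat_rec (const ([] : List Bool)) hstage).of_eq fun b s => ?_
  induction s with
  | zero => rfl
  | succ s ih => simp [run, ih]

theorem run_eventually_eq (s : ℕ) :
    ∃ b₀, ∀ b, b₀ ≤ b → run (firstWitnessBelow b) s = run firstWitness s := by
  induction s with
  | zero => exact ⟨0, fun _ _ => rfl⟩
  | succ s ih =>
    obtain ⟨b₀, hb₀⟩ := ih
    obtain ⟨b₁, hb₁⟩ := firstWitnessBelow_eventually_eq s.unpair.1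
      (mark s (run firstWitness s)).length
    refine ⟨max b₀ b₁, fun b hb => ?_⟩
    change stage _ s (run _ s) = stage _ s (run _ s)
    rw [hb₀ b (le_of_max_le_left hb), stage, stage, hb₁ b (le_of_max_le_right hb)]

theorem limitComputable : LimitComputable rigidSet := by
  refine ⟨fun b n => (run (firstWitnessBelow b) (n + 1)).getD n false,
    ((list_getD false).comp (primrec_run.comp fst (succ.comp snd)) snd).to_comp, fun n => ?_⟩
  obtain ⟨b₀, hb₀⟩ := run_eventually_eq (n + 1)
  exact ⟨b₀, fun b hb => by dsimp only; rw [hb₀ b hb]; rfl⟩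

end RigidSet

/-- **One degree containing both structures.**  There exist a nonrecursive limit
computable set `A`, a family `{B_q}_{q ∈ ℚ ∩ (1,2)}`, and a family `{W_n}_{n ∈ ℕ}`
such that: (i) `B_q ≡_bfo A` for all `q ∈ ℚ ∩ (1,2)`; (ii) `W_n ≡_bfo A` for all
`n`; (iii) `B_p <₁ B_q` whenever `p < q` in `ℚ ∩ (1,2)`; (iv) `¬ W_n ≤₁ W_m`
whenever `n ≠ m`.  So the bounded finite-one degree of `A` contains both a copy
of `(ℚ, ≤)` and an infinite antichain of 1-degrees. -/
theorem one_degree_both_structures :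
    ∃ (A : Set ℕ) (B : ℚ → Set ℕ) (W : ℕ → Set ℕ),
      ¬ ComputablePred (· ∈ A) ∧
      LimitComputable A ∧
      (∀ q ∈ Set.Ioo (1 : ℚ) 2, BfoEquiv (B q) A) ∧
      (∀ n, BfoEquiv (W n) A) ∧
      (∀ p ∈ Set.Ioo (1 : ℚ) 2, ∀ q ∈ Set.Ioo (1 : ℚ) 2,
        p < q → OneOneLt (B p) (B q)) ∧
      (∀ n m, n ≠ m → ¬ OneOneRed (W n) (W m)) := by
  have hD := RigidSet.computablyRigid
  have hB := computable_ratOf_lt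
  have hW (n : ℕ) : Computable fun e => decide (e = n) :=
    Primrec.eq.decide.to_comp.comp Computable.id (Computable.const n)
  refine ⟨copies rigidSet 1, fun q => copies rigidSet (oneOrTwo fun e => decide (ratOf e < q)),
    fun n => copies rigidSet (oneOrTwo fun e => decide (e = n)),
    fun h => hD.not_computablePred RigidSet.infinite_rigidSet
      (computablePred_of_copies h fun _ => le_rfl),
    RigidSet.limitComputable.copies (Computable.const 1),
    fun q _ => bfoEquiv_copies_oneOrTwo (hB q), fun n => bfoEquiv_copies_oneOrTwo (hW n),
    fun p hp q _ hpq => ?_, fun n m hnm => ?_⟩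
  · -- `p` itself names a column with two copies in `B q` but one in `B p`
    obtain ⟨e, he⟩ := exists_ratOf_eq (p := p) (by linarith [hp.1])
    exact ⟨oneOneRed_copies_oneOrTwo (hB p) (hB q)
        fun e' h => by simp only [decide_eq_true_eq] at h ⊢; linarith,
      hD.not_oneOneRed_copies_oneOrTwo (RigidSet.infinite_column e) (hB p) (hB q)
        (by simp [he]) (by simp [he, hpq])⟩
  · exact hD.not_oneOneRed_copies_oneOrTwo (RigidSet.infinite_column n) (hW m) (hW n)
      (by simpa using hnm) (by simp)
end

section
/- Computable partial orders corollary. Let ⪯ be a computable (decidable) partial order on ℕ (reflexive, transitive, antisymmetric, with computable characteristic function of the relation). Then there exist a limit computable set A ⊆ ℕ and sets B_0, B_1, … ⊆ ℕ such that B_i ≡_bfo A for every i ∈ ℕ, and for all i, j ∈ ℕ: B_i ≤₁ B_j if and only if i ⪯ j. Hence i ↦ deg₁(B_i) is an order-embedding of (ℕ, ⪯) into the partially ordered set of 1-degrees contained in the bounded finite-one degree of A. -/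
/-- The set `stretchSet A s` repeats every bit of column `k` of `A` (the positions `⟨k, m⟩`)
`s k` times; `stretchPos s v` is the position of `A` that decides whether `v` belongs to it. -/
def stretchPos (s : ℕ → ℕ) (v : ℕ) : ℕ :=
  Nat.pair v.unpair.1 (v.unpair.2 / s v.unpair.1)

def stretchSet (A : Set ℕ) (s : ℕ → ℕ) : Set ℕ :=
  stretchPos s ⁻¹' A

@[simp]
theorem stretchPos_pair (s : ℕ → ℕ) (k m : ℕ) :
    stretchPos s (Nat.pair k m) = Nat.pair k (m / s k) := by
  simp [stretchPos]

theorem computable_stretchPos {α : Type*} [Primcodable α] {s : α → ℕ → ℕ} {f : α → ℕ}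
    (hs : Computable₂ s) (hf : Computable f) :
    Computable fun a => stretchPos (s a) (f a) := by
  have hk : Computable fun a => (f a).unpair.1 :=
    (Primrec.fst.comp Primrec.unpair).to_comp.comp hf
  have hm : Computable fun a => (f a).unpair.2 :=
    (Primrec.snd.comp Primrec.unpair).to_comp.comp hf
  exact Primrec₂.natPair.to_comp.comp hk
    (Primrec.nat_div.to_comp.comp hm (hs.comp Computable.id hk))

theorem stretchSet_one (A : Set ℕ) : stretchSet A (fun _ => 1) = A := by
  ext v
  simp [stretchSet, stretchPos]

theorem oneOneRed_stretchSet_of_dvd {A : Set ℕ} {s s' : ℕ → ℕ} (hs : Computable s)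
    (hs' : Computable s') (hpos : ∀ k, 0 < s' k) (hdvd : ∀ k, s k ∣ s' k) :
    OneOneRed (stretchSet A s) (stretchSet A s') := by
  set r : ℕ → ℕ := fun k => s' k / s k
  have hr : ∀ k, 0 < r k := fun k =>
    Nat.div_pos (Nat.le_of_dvd (hpos k) (hdvd k)) (Nat.pos_of_dvd_of_pos (hdvd k) (hpos k))
  refine ⟨fun v => Nat.pair v.unpair.1 (r v.unpair.1 * v.unpair.2), ?_, ?_, fun v => ?_⟩
  · have hk : Computable fun v : ℕ => v.unpair.1 := (Primrec.fst.comp Primrec.unpair).to_comp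
    have hm : Computable fun v : ℕ => v.unpair.2 := (Primrec.snd.comp Primrec.unpair).to_comp
    exact Primrec₂.natPair.to_comp.comp hk
      (Primrec.nat_mul.to_comp.comp (Primrec.nat_div.to_comp.comp (hs'.comp hk) (hs.comp hk)) hm)
  · intro v v' h
    obtain ⟨hk, hm⟩ := Nat.pair_eq_pair.1 h
    rw [hk] at hm
    rw [← Nat.pair_unpair v, ← Nat.pair_unpair v', hk, Nat.eq_of_mul_eq_mul_left (hr _) hm]
  · have hs'_eq : s' v.unpair.1 = r v.unpair.1 * s v.unpair.1 :=
      (Nat.div_mul_cancel (hdvd _)).symm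
    simp only [stretchSet, Set.mem_preimage, stretchPos_pair, hs'_eq,
      Nat.mul_div_mul_left _ _ (hr _)]
    exact Iff.rfl

theorem encard_stretchPos_fiber_le {s : ℕ → ℕ} (hpos : ∀ k, 0 < s k) (y : ℕ) :
    {v | stretchPos s v = y}.encard ≤ s y.unpair.1 := by
  set k := y.unpair.1
  set m := y.unpair.2
  have hsub : {v | stretchPos s v = y} ⊆
      (Finset.range (s k)).image fun r => Nat.pair k (s k * m + r) := by
    intro v hv
    obtain ⟨hk, hm⟩ : v.unpair.1 = k ∧ v.unpair.2 / s k = m := by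
      rw [← Nat.pair_unpair y] at hv
      obtain ⟨hk, hm⟩ := Nat.pair_eq_pair.1 hv
      exact ⟨hk, by rwa [hk] at hm⟩
    refine Finset.mem_image.2 ⟨v.unpair.2 % s k, Finset.mem_range.2 (Nat.mod_lt _ (hpos k)), ?_⟩
    rw [← hm, Nat.div_add_mod, ← hk, Nat.pair_unpair]
  calc {v | stretchPos s v = y}.encard
      ≤ ((Finset.range (s k)).image fun r => Nat.pair k (s k * m + r) : Set ℕ).encard :=
        Set.encard_le_encard hsub
    _ ≤ s k := by
        rw [Set.encard_coe_eq_coe_finsetCard]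
        exact_mod_cast Finset.card_image_le.trans (Finset.card_range _).le

theorem bfoEquiv_stretchSet (A : Set ℕ) {s : ℕ → ℕ} {c : ℕ} (hs : Computable s)
    (hpos : ∀ k, 0 < s k) (hbound : ∀ k, s k ≤ c) : BfoEquiv (stretchSet A s) A := by
  refine ⟨⟨stretchPos s, computable_stretchPos (hs.comp Computable.snd).to₂ Computable.id,
    ⟨c, (hpos 0).trans_le (hbound 0), fun y => ?_⟩, fun _ => Iff.rfl⟩, ?_⟩
  · exact (encard_stretchPos_fiber_le hpos y).trans (by exact_mod_cast hbound _)
  · have h := oneOneRed_stretchSet_of_dvd (A := A) (Computable.const 1) hs hpos fun _ => one_dvd _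
    rw [stretchSet_one] at h
    exact h.bfoRed

namespace PartialOrderEmbedding

open Nat.Partrec (Code)
open Nat.Partrec.Code Filter

variable {le : ℕ → ℕ → Bool}

def stretchFactor (le : ℕ → ℕ → Bool) (j k : ℕ) : ℕ :=
  bif le k j then 2 else 1

theorem stretchFactor_pos (j k : ℕ) : 0 < stretchFactor le j k := by
  unfold stretchFactor; cases le k j <;> decide

theorem stretchFactor_le_two (j k : ℕ) : stretchFactor le j k ≤ 2 := by
  unfold stretchFactor; cases le k j <;> decide

theorem computable₂_stretchFactor (hle : Computable₂ le) : Computable₂ (stretchFactor le) :=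
  Computable.cond (hle.comp Computable.snd Computable.fst) (Computable.const 2)
    (Computable.const 1)

theorem stretchFactor_dvd (htrans : ∀ i j k, le i j = true → le j k = true → le i k = true)
    {i j : ℕ} (hij : le i j = true) (k : ℕ) : stretchFactor le i k ∣ stretchFactor le j k := by
  unfold stretchFactor
  cases hki : le k i
  · exact one_dvd _
  · rw [htrans k i j hki hij]

theorem oneOneRed_stretchSet_of_le (A : Set ℕ) (hle : Computable₂ le)
    (htrans : ∀ i j k, le i j = true → le j k = true → le i k = true)
    {i j : ℕ} (hij : le i j = true) :
    OneOneRed (stretchSet A (stretchFactor le i)) (stretchSet A (stretchFactor le j)) :=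
  have hs : ∀ i, Computable (stretchFactor le i) := fun i =>
    (computable₂_stretchFactor hle).comp (Computable.const i) Computable.id
  oneOneRed_stretchSet_of_dvd (hs i) (hs j) (stretchFactor_pos j) (stretchFactor_dvd htrans hij)

theorem bfoEquiv_stretchSet_stretchFactor (A : Set ℕ) (hle : Computable₂ le) (i : ℕ) :
    BfoEquiv (stretchSet A (stretchFactor le i)) A :=
  bfoEquiv_stretchSet A ((computable₂_stretchFactor hle).comp (Computable.const i) Computable.id)
    (stretchFactor_pos i) (stretchFactor_le_two i)

section Construction

/-- A finite approximation of the set `A` under construction: a list of (position, bit);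
`List.lookup` reads the leftmost entry for a position. -/
abbrev State := List (ℕ × Bool)

def keyBound (L : State) : ℕ :=
  L.foldr (fun p n => p.1 + n) 0

theorem lookup_eq_none_of_keyBound_lt {L : State} {n : ℕ} (h : keyBound L < n) :
    L.lookup n = none := by
  induction L with
  | nil => rfl
  | cons p L ih =>
    obtain ⟨k, b⟩ := p
    simp only [keyBound, List.foldr_cons] at h ih
    rw [List.lookup_cons, beq_false_of_ne (by omega)]
    exact ih (by omega)

/-- Stage `t = ⟨e, ⟨i, j⟩⟩` makes sure that the `e`-th computable function is not a one-one
reduction of `B i` to `B j`. -/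
def stageCode (t : ℕ) : ℕ := t.unpair.1

def stageSrc (t : ℕ) : ℕ := t.unpair.2.unpair.1

def stageTgt (t : ℕ) : ℕ := t.unpair.2.unpair.2

def freshIndex (t : ℕ) (L : State) : ℕ := keyBound L + t + 1

def witness (t : ℕ) (L : State) : ℕ := Nat.pair (stageSrc t) (freshIndex t L)

def testPoint (t : ℕ) (L : State) (r : ℕ) : ℕ := Nat.pair (stageSrc t) (2 * freshIndex t L + r)

theorem lt_witness (t : ℕ) (L : State) : t < witness t L :=
  Nat.lt_of_lt_of_le (by unfold freshIndex; omega) (Nat.right_le_pair _ _)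

theorem lookup_witness (t : ℕ) (L : State) : L.lookup (witness t L) = none :=
  lookup_eq_none_of_keyBound_lt <|
    Nat.lt_of_lt_of_le (by unfold freshIndex; omega) (Nat.right_le_pair _ _)

def assignAgainst (L : State) (w p : ℕ) : State :=
  (w, !(L.lookup p).getD false) :: (p, (L.lookup p).getD false) :: L

theorem lookup_assignAgainst_self (L : State) (w p : ℕ) :
    (assignAgainst L w p).lookup w = some !(L.lookup p).getD false := by
  rw [assignAgainst, List.lookup_cons, beq_self_eq_true]

theorem lookup_assignAgainst_of_ne {L : State} {w p : ℕ} (h : p ≠ w) :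
    (assignAgainst L w p).lookup p = some ((L.lookup p).getD false) := by
  rw [assignAgainst, List.lookup_cons, beq_false_of_ne h, List.lookup_cons, beq_self_eq_true]

theorem lookup_assignAgainst_of_eq_some {L : State} {w p n : ℕ} {b : Bool}
    (hw : L.lookup w = none) (h : L.lookup n = some b) :
    (assignAgainst L w p).lookup n = some b := by
  have hnw : n ≠ w := by rintro rfl; simp [hw] at h
  rw [assignAgainst, List.lookup_cons, beq_false_of_ne hnw, List.lookup_cons]
  by_cases hnp : n = p
  · subst hnp; rw [beq_self_eq_true, h]; rfl
  · rw [beq_false_of_ne hnp, h]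

theorem lookup_assignAgainst_eq_some_true {L : State} {w p n : ℕ}
    (h : (assignAgainst L w p).lookup n = some true) : n = w ∨ L.lookup n = some true := by
  by_cases hnw : n = w
  · exact .inl hnw
  rw [assignAgainst, List.lookup_cons, beq_false_of_ne hnw, List.lookup_cons] at h
  by_cases hnp : n = p
  · subst hnp
    rw [beq_self_eq_true] at h
    cases hp : L.lookup n <;> simp_all
  · rw [beq_false_of_ne hnp] at h
    exact .inr h

def otherPos (s : ℕ → ℕ) (w a₀ a₁ : ℕ) : ℕ :=
  if stretchPos s a₀ = w then stretchPos s a₁ else stretchPos s a₀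

theorem otherPos_eq_or (s : ℕ → ℕ) (w a₀ a₁ : ℕ) :
    otherPos s w a₀ a₁ = stretchPos s a₀ ∨ otherPos s w a₀ a₁ = stretchPos s a₁ := by
  unfold otherPos; split_ifs <;> simp

theorem otherPos_ne {s : ℕ → ℕ} {k m a₀ a₁ : ℕ} (hs : s k = 1) (hne : a₀ ≠ a₁) :
    otherPos s (Nat.pair k m) a₀ a₁ ≠ Nat.pair k m := by
  have hcol : ∀ a, stretchPos s a = Nat.pair k m → a = Nat.pair k m := fun a ha => by
    obtain ⟨hk, hm⟩ := Nat.pair_eq_pair.1 ha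
    rw [hk, hs, Nat.div_one] at hm
    rw [← Nat.pair_unpair a, hk, hm]
  unfold otherPos
  split_ifs with h₀
  · exact fun h₁ => hne ((hcol a₀ h₀).trans (hcol a₁ h₁).symm)
  · exact h₀

/-- `φ e x` is what the construction takes to be the output of the `e`-th program on input `x`. -/
def stage (le : ℕ → ℕ → Bool) (φ : ℕ → ℕ → Option ℕ) (t : ℕ) (L : State) : State :=
  match φ (stageCode t) (testPoint t L 0), φ (stageCode t) (testPoint t L 1) with
  | some a₀, some a₁ =>
    assignAgainst L (witness t L) (otherPos (stretchFactor le (stageTgt t)) (witness t L) a₀ a₁)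
  | _, _ => L

def run (le : ℕ → ℕ → Bool) (φ : ℕ → ℕ → Option ℕ) : ℕ → State
  | 0 => []
  | t + 1 => stage le φ t (run le φ t)

variable {φ : ℕ → ℕ → Option ℕ} {t : ℕ} {L : State}

theorem stage_eq_or (le : ℕ → ℕ → Bool) (φ : ℕ → ℕ → Option ℕ) (t : ℕ) (L : State) :
    stage le φ t L = L ∨ ∃ p, stage le φ t L = assignAgainst L (witness t L) p := by
  unfold stage
  split
  · exact .inr ⟨_, rfl⟩
  · exact .inl rfl

theorem stage_of_eq_some {a₀ a₁ : ℕ} (h₀ : φ (stageCode t) (testPoint t L 0) = some a₀)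
    (h₁ : φ (stageCode t) (testPoint t L 1) = some a₁) :
    stage le φ t L = assignAgainst L (witness t L)
      (otherPos (stretchFactor le (stageTgt t)) (witness t L) a₀ a₁) := by
  rw [stage, h₀, h₁]

theorem stage_congr {ψ : ℕ → ℕ → Option ℕ}
    (h₀ : φ (stageCode t) (testPoint t L 0) = ψ (stageCode t) (testPoint t L 0))
    (h₁ : φ (stageCode t) (testPoint t L 1) = ψ (stageCode t) (testPoint t L 1)) :
    stage le φ t L = stage le ψ t L := by
  rw [stage, stage, h₀, h₁]

theorem lookup_stage_of_eq_some {n : ℕ} {b : Bool} (h : L.lookup n = some b) :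
    (stage le φ t L).lookup n = some b := by
  obtain hs | ⟨p, hs⟩ := stage_eq_or le φ t L <;> rw [hs]
  · exact h
  · exact lookup_assignAgainst_of_eq_some (lookup_witness t L) h

theorem lookup_stage_eq_some_true {n : ℕ} (h : (stage le φ t L).lookup n = some true) :
    n = witness t L ∨ L.lookup n = some true := by
  obtain hs | ⟨p, hs⟩ := stage_eq_or le φ t L <;> rw [hs] at h
  · exact .inr h
  · exact lookup_assignAgainst_eq_some_true h

theorem lookup_run_of_le {T T' n : ℕ} {b : Bool} (hT : T ≤ T')
    (h : (run le φ T).lookup n = some b) : (run le φ T').lookup n = some b := by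
  induction T', hT using Nat.le_induction with
  | base => exact h
  | succ T' _ ih => exact lookup_stage_of_eq_some ih

/-- Only the witness of stage `t`, which exceeds `t`, can newly become `true` at that stage. -/
theorem lookup_run_self_of_eq_some_true {T n : ℕ} (h : (run le φ T).lookup n = some true) :
    (run le φ n).lookup n = some true := by
  induction T with
  | zero => simp [run] at h
  | succ T ih =>
    rcases le_or_gt (T + 1) n with hTn | hnT
    · exact lookup_run_of_le hTn h
    · rcases lookup_stage_eq_some_true h with hw | h
      · exact absurd (hw ▸ lt_witness T _) (by omega)
      · exact ih h

end Construction

section Computability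

theorem primrec_keyBound : Primrec keyBound :=
  Primrec.list_foldr Primrec.id (Primrec.const 0)
    (Primrec.nat_add.comp (Primrec.fst.comp (Primrec.fst.comp Primrec.snd))
      (Primrec.snd.comp Primrec.snd)).to₂

theorem primrec_stageSrc : Primrec stageSrc :=
  Primrec.fst.comp (Primrec.unpair.comp (Primrec.snd.comp Primrec.unpair))

theorem primrec_freshIndex : Primrec fun q : ℕ × State => freshIndex q.1 q.2 :=
  Primrec.nat_add.comp (Primrec.nat_add.comp (primrec_keyBound.comp Primrec.snd) Primrec.fst)
    (Primrec.const 1)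

theorem primrec_witness : Primrec fun q : ℕ × State => witness q.1 q.2 :=
  Primrec₂.natPair.comp (primrec_stageSrc.comp Primrec.fst) primrec_freshIndex

theorem primrec_testPoint (r : ℕ) : Primrec fun q : ℕ × State => testPoint q.1 q.2 r :=
  Primrec₂.natPair.comp (primrec_stageSrc.comp Primrec.fst)
    (Primrec.nat_add.comp (Primrec.nat_mul.comp (Primrec.const 2) primrec_freshIndex)
      (Primrec.const r))

theorem primrec_assignAgainst : Primrec fun q : State × ℕ × ℕ => assignAgainst q.1 q.2.1 q.2.2 :=
  have hb : Primrec fun q : State × ℕ × ℕ => (q.1.lookup q.2.2).getD false :=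
    Primrec.option_getD.comp (Primrec.listLookup.comp (Primrec.snd.comp Primrec.snd) Primrec.fst)
      (Primrec.const false)
  Primrec.list_cons.comp
    (Primrec.pair (Primrec.fst.comp Primrec.snd) ((Primrec.dom_bool not).comp hb))
    (Primrec.list_cons.comp (Primrec.pair (Primrec.snd.comp Primrec.snd) hb) Primrec.fst)

variable {α : Type*} [Primcodable α]

theorem computable_otherPos {s : α → ℕ → ℕ} {w a₀ a₁ : α → ℕ} (hs : Computable₂ s)
    (hw : Computable w) (ha₀ : Computable a₀) (ha₁ : Computable a₁) :
    Computable fun x => otherPos (s x) (w x) (a₀ x) (a₁ x) :=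
  (Computable.cond (Primrec.eq.decide.to_comp.comp (computable_stretchPos hs ha₀) hw)
    (computable_stretchPos hs ha₁) (computable_stretchPos hs ha₀)).of_eq fun x => by
    simp only [otherPos, Bool.cond_decide]

variable {φ : α → ℕ → ℕ → Option ℕ}

theorem computable_stage (hle : Computable₂ le)
    (hφ : Computable fun q : α × ℕ × ℕ => φ q.1 q.2.1 q.2.2) :
    Computable fun q : α × ℕ × State => stage le (φ q.1) q.2.1 q.2.2 := by
  have htL : Computable fun q : α × ℕ × State => q.2 := Computable.snd
  have hL : Computable fun q : α × ℕ × State => q.2.2 := Computable.snd.comp Computable.snd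
  have hw : Computable fun q : α × ℕ × State => witness q.2.1 q.2.2 :=
    primrec_witness.to_comp.comp htL
  have hans : ∀ r, Computable fun q : α × ℕ × State =>
      φ q.1 (stageCode q.2.1) (testPoint q.2.1 q.2.2 r) := fun r =>
    hφ.comp (Computable.pair Computable.fst
      (Computable.pair ((Primrec.fst.comp Primrec.unpair).to_comp.comp (Computable.fst.comp htL))
        ((primrec_testPoint r).to_comp.comp htL)))
  -- the state after the stage, as a function of `((q, a₀), a₁)`
  have hnext : Computable fun x : ((α × ℕ × State) × ℕ) × ℕ =>
      assignAgainst x.1.1.2.2 (witness x.1.1.2.1 x.1.1.2.2)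
        (otherPos (stretchFactor le (stageTgt x.1.1.2.1)) (witness x.1.1.2.1 x.1.1.2.2)
          x.1.2 x.2) := by
    have hq : Computable fun x : ((α × ℕ × State) × ℕ) × ℕ => x.1.1 :=
      Computable.fst.comp Computable.fst
    have hj : Computable fun x : ((α × ℕ × State) × ℕ) × ℕ => stageTgt x.1.1.2.1 :=
      (Primrec.snd.comp (Primrec.unpair.comp (Primrec.snd.comp Primrec.unpair))).to_comp.comp
        (Computable.fst.comp (htL.comp hq))
    have hp : Computable fun x : ((α × ℕ × State) × ℕ) × ℕ =>
        otherPos (stretchFactor le (stageTgt x.1.1.2.1)) (witness x.1.1.2.1 x.1.1.2.2)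
          x.1.2 x.2 :=
      computable_otherPos ((computable₂_stretchFactor hle).comp (hj.comp Computable.fst)
        Computable.snd) (hw.comp hq) (Computable.snd.comp Computable.fst) Computable.snd
    exact (primrec_assignAgainst.to_comp.comp
      (Computable.pair (hL.comp hq) (Computable.pair (hw.comp hq) hp))).of_eq fun _ => rfl
  refine (Computable.option_getD (Computable.option_bind (hans 0)
    (Computable.option_map ((hans 1).comp Computable.fst) hnext.to₂).to₂) hL).of_eq fun q => ?_
  unfold stage
  cases φ q.1 (stageCode q.2.1) (testPoint q.2.1 q.2.2 0) <;>
    cases h₁ : φ q.1 (stageCode q.2.1) (testPoint q.2.1 q.2.2 1) <;> simp [h₁]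

theorem computable_run (hle : Computable₂ le)
    (hφ : Computable fun q : α × ℕ × ℕ => φ q.1 q.2.1 q.2.2) :
    Computable fun q : α × ℕ => run le (φ q.1) q.2 := by
  refine (Computable.nat_rec Computable.snd (Computable.const []) ((computable_stage hle hφ).comp
    (Computable.pair (Computable.fst.comp Computable.fst) Computable.snd)).to₂).of_eq fun q => ?_
  induction q.2 with
  | zero => rfl
  | succ T ih => simp only [run, ← ih]

end Computability

open Classical in
noncomputable def haltingAnswer (e x : ℕ) : Option ℕ :=
  (eval (Denumerable.ofNat Code e) x).toOption

def boundedAnswer (s e x : ℕ) : Option ℕ :=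
  evaln s (Denumerable.ofNat Code e) x

def diagSet (le : ℕ → ℕ → Bool) : Set ℕ :=
  {n | ∃ T, (run le haltingAnswer T).lookup n = some true}

theorem mem_diagSet_iff_of_lookup {T n : ℕ} {b : Bool}
    (h : (run le haltingAnswer T).lookup n = some b) : n ∈ diagSet le ↔ b = true := by
  refine ⟨fun ⟨T', h'⟩ => ?_, fun hb => ⟨T, hb ▸ h⟩⟩
  exact Option.some_injective _
    ((lookup_run_of_le (le_max_left T T') h).symm.trans (lookup_run_of_le (le_max_right T T') h'))

theorem mem_diagSet_iff {n : ℕ} :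
    n ∈ diagSet le ↔ (run le haltingAnswer n).lookup n = some true :=
  ⟨fun ⟨_, h⟩ => lookup_run_self_of_eq_some_true h, fun h => ⟨n, h⟩⟩

theorem eventually_boundedAnswer_eq (e x : ℕ) :
    ∀ᶠ s in atTop, boundedAnswer s e x = haltingAnswer e x := by
  classical
  by_cases hd : (eval (Denumerable.ofNat Code e) x).Dom
  · obtain ⟨k, hk⟩ := evaln_complete.1 (Part.get_mem hd)
    filter_upwards [eventually_ge_atTop k] with s hs
    rw [boundedAnswer, Option.mem_def.1 (evaln_mono hs hk), haltingAnswer,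
      Part.toOption_eq_some_iff.2 (Part.get_mem hd)]
  · refine Eventually.of_forall fun s => ?_
    rw [haltingAnswer, Part.toOption_eq_none_iff.2 hd, boundedAnswer,
      Option.eq_none_iff_forall_ne_some]
    exact fun a ha => hd (Part.dom_iff_mem.2 ⟨a, evaln_sound ha⟩)

theorem eventually_run_boundedAnswer_eq (T : ℕ) :
    ∀ᶠ s in atTop, run le (boundedAnswer s) T = run le haltingAnswer T := by
  induction T with
  | zero => exact Eventually.of_forall fun _ => rfl
  | succ T ih =>
    set L := run le haltingAnswer T
    filter_upwards [ih, eventually_boundedAnswer_eq (stageCode T) (testPoint T L 0),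
      eventually_boundedAnswer_eq (stageCode T) (testPoint T L 1)] with s hT h₀ h₁
    rw [run, run, hT]
    exact stage_congr h₀ h₁

theorem limitComputable_diagSet (hle : Computable₂ le) : LimitComputable (diagSet le) := by
  refine ⟨fun s n => ((run le (boundedAnswer s) n).lookup n).getD false, ?_, fun n => ?_⟩
  · have hφ : Computable fun q : ℕ × ℕ × ℕ => boundedAnswer q.1 q.2.1 q.2.2 :=
      primrec_evaln.to_comp.comp (Computable.pair (Computable.pair Computable.fst
        ((Primrec.ofNat Code).to_comp.comp (Computable.fst.comp Computable.snd)))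
          (Computable.snd.comp Computable.snd))
    exact Computable.option_getD (Primrec.listLookup.to_comp.comp Computable.snd
      (computable_run hle hφ)) (Computable.const false)
  · obtain ⟨s₀, hs₀⟩ := (eventually_run_boundedAnswer_eq (le := le) n).exists_forall_of_atTop
    refine ⟨s₀, fun s hs => ?_⟩
    dsimp only
    rw [hs₀ s hs, mem_diagSet_iff]
    cases (run le haltingAnswer n).lookup n <;> simp

theorem haltingAnswer_encode {c : Code} {f : ℕ → ℕ} (hc : eval c = f) (x : ℕ) :
    haltingAnswer (Encodable.encode c) x = some (f x) := by
  classical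
  rw [haltingAnswer, Denumerable.ofNat_encode, hc]
  exact Part.toOption_eq_some_iff.2 (Part.mem_some _)

theorem stretchPos_testPoint {t : ℕ} (L : State) (ht : le (stageSrc t) (stageSrc t) = true)
    {r : ℕ} (hr : r < 2) :
    stretchPos (stretchFactor le (stageSrc t)) (testPoint t L r) = witness t L := by
  rw [testPoint, stretchPos_pair, stretchFactor, ht]
  congr 1
  dsimp only [cond_true]
  omega

theorem not_oneOneRed_of_not_le (hrefl : ∀ i, le i i = true) {i j : ℕ} (hij : le i j = false) :
    ¬ OneOneRed (stretchSet (diagSet le) (stretchFactor le i))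
      (stretchSet (diagSet le) (stretchFactor le j)) := by
  rintro ⟨f, hf, hinj, hred⟩
  obtain ⟨c, hc⟩ := exists_code.1 (Partrec.nat_iff.1 hf)
  set t := Nat.pair (Encodable.encode c) (Nat.pair i j)
  have he : stageCode t = Encodable.encode c := by simp [t, stageCode]
  have hi : stageSrc t = i := by simp [t, stageSrc]
  have hj : stageTgt t = j := by simp [t, stageTgt]
  set L := run le haltingAnswer t
  set w := witness t L
  obtain ⟨p, hp⟩ : ∃ p, p = otherPos (stretchFactor le j) w (f (testPoint t L 0))
      (f (testPoint t L 1)) := ⟨_, rfl⟩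
  have hans : ∀ x, haltingAnswer (stageCode t) x = some (f x) := fun x => by
    rw [he, haltingAnswer_encode hc]
  have hstage : run le haltingAnswer (t + 1) = assignAgainst L w p := by
    rw [run, stage_of_eq_some (hans _) (hans _), hj, hp]
  have hpw : p ≠ w := hp ▸ otherPos_ne (by simp [stretchFactor, hi, hij])
    (hinj.ne (by simp [testPoint, Nat.pair_eq_pair]))
  have hwp : w ∈ diagSet le ↔ p ∈ diagSet le := by
    have hx : ∀ r < 2, w ∈ diagSet le ↔
        stretchPos (stretchFactor le j) (f (testPoint t L r)) ∈ diagSet le := fun r hr => by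
      have h := hred (testPoint t L r)
      rw [stretchSet, Set.mem_preimage, ← hi, stretchPos_testPoint L (hi ▸ hrefl i) hr] at h
      exact h
    rcases otherPos_eq_or (stretchFactor le j) w (f (testPoint t L 0)) (f (testPoint t L 1))
      with h | h <;> rw [hp, h]
    exacts [hx 0 (by norm_num), hx 1 (by norm_num)]
  rw [mem_diagSet_iff_of_lookup (hstage ▸ lookup_assignAgainst_self L w p),
    mem_diagSet_iff_of_lookup (hstage ▸ lookup_assignAgainst_of_ne hpw)] at hwp
  simp at hwp

end PartialOrderEmbedding

open PartialOrderEmbedding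

theorem computable_partial_orders_general
    (le : ℕ → ℕ → Bool) (hle_comp : Computable₂ le)
    (hrefl : ∀ i, le i i = true)
    (htrans : ∀ i j k, le i j = true → le j k = true → le i k = true) :
    ∃ (A : Set ℕ) (B : ℕ → Set ℕ),
      LimitComputable A ∧
      (∀ i, BfoEquiv (B i) A) ∧
      (∀ i j, OneOneRed (B i) (B j) ↔ le i j = true) := by
  refine ⟨diagSet le, fun i => stretchSet (diagSet le) (stretchFactor le i),
    limitComputable_diagSet hle_comp, bfoEquiv_stretchSet_stretchFactor _ hle_comp,
    fun i j => ⟨fun h => ?_, oneOneRed_stretchSet_of_le _ hle_comp htrans⟩⟩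
  by_contra hij
  exact not_oneOneRed_of_not_le hrefl (Bool.eq_false_iff.2 hij) h

/-- **Computable partial orders corollary.**  For any computable (decidable)
partial order `⪯` on `ℕ`, there are a limit computable set `A` and sets
`B_0, B_1, …` with `B_i ≡_bfo A` for every `i` and `B_i ≤₁ B_j ↔ i ⪯ j`.
Hence `i ↦ deg₁(B_i)` order-embeds `(ℕ, ⪯)` into the 1-degrees contained in
the bounded finite-one degree of `A`. -/
theorem computable_partial_orders
    (le : ℕ → ℕ → Bool) (hle_comp : Computable₂ le)
    (hrefl : ∀ i, le i i = true)
    (htrans : ∀ i j k, le i j = true → le j k = true → le i k = true)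
    (hantisymm : ∀ i j, le i j = true → le j i = true → i = j) :
    ∃ (A : Set ℕ) (B : ℕ → Set ℕ),
      LimitComputable A ∧
      (∀ i, BfoEquiv (B i) A) ∧
      (∀ i j, OneOneRed (B i) (B j) ↔ le i j = true) :=
  computable_partial_orders_general le hle_comp hrefl htrans
end

section
/- Blockwise coding map lemma. Let ℓ : ℕ → ℕ be a computable function with k! ≤ ℓ(k) < 2·k! for every k. Define a_0 = 0, a_{k+1} = a_k + k!, b_0 = 0, b_{k+1} = b_k + ℓ(k), and let h : ℕ → ℕ be given by h(b_k + r) = a_k + ⌊r·k!/ℓ(k)⌋ for 0 ≤ r < ℓ(k). Then: (i) h is a well-defined total computable function; (ii) h maps the block [b_k, b_{k+1}) onto the block [a_k, a_{k+1}) for every k; (iii) h is surjective; (iv) every fiber h⁻¹(y) has at most 2 elements (so h is bounded finite-one with global bound 2). -/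
open Nat

/-- partial sums by recursion -/
def sumTo (f : ℕ → ℕ) : ℕ → ℕ
  | 0 => 0
  | n + 1 => sumTo f n + f n

lemma sumTo_eq (f : ℕ → ℕ) (n : ℕ) : sumTo f n = ∑ m ∈ Finset.range n, f m := by
  induction n with
  | zero => rfl
  | succ n ih => rw [Finset.sum_range_succ, ← ih]; rfl

lemma sumTo_computable {f : ℕ → ℕ} (hf : Computable f) : Computable (sumTo f) := by
  have : Computable fun n => Nat.rec (motive := fun _ => ℕ) 0
      (fun y IH => IH + f y) n :=
    Computable.nat_rec Computable.id (Computable.const 0)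
      ((Primrec.nat_add.to_comp.comp (Computable.snd.comp Computable.snd)
        (hf.comp (Computable.fst.comp Computable.snd))).to₂)
  exact this.of_eq fun n => by induction n with
    | zero => rfl
    | succ n ih => simp [sumTo, ← ih]

lemma factorial_computable : Computable Nat.factorial := by
  have : Computable fun n => Nat.rec (motive := fun _ => ℕ) 1
      (fun y IH => (y + 1) * IH) n :=
    Computable.nat_rec Computable.id (Computable.const 1)
      ((Primrec.nat_mul.to_comp.comp
        (Primrec.succ.to_comp.comp (Computable.fst.comp Computable.snd))
        (Computable.snd.comp Computable.snd)).to₂)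
  exact this.of_eq fun n => by induction n with
    | zero => rfl
    | succ n ih => simp [Nat.factorial, ← ih]

/-- block index function: number of `k < x` with `b (k+1) ≤ x`. -/
def idxF (ℓ : ℕ → ℕ) (x : ℕ) : ℕ :=
  ∑ k ∈ Finset.range x, min (x + 1 - sumTo ℓ (k + 1)) 1

lemma idxF_computable {ℓ : ℕ → ℕ} (hℓ : Computable ℓ) : Computable (idxF ℓ) := by
  have hb := sumTo_computable hℓ
  have : Computable fun x => Nat.rec (motive := fun _ => ℕ) 0
      (fun y IH => IH + min (x + 1 - sumTo ℓ (y + 1)) 1) x :=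
    Computable.nat_rec Computable.id (Computable.const 0)
      ((Primrec.nat_add.to_comp.comp (Computable.snd.comp Computable.snd)
        (Primrec.nat_min.to_comp.comp
          (Primrec.nat_sub.to_comp.comp
            (Primrec.succ.to_comp.comp Computable.fst)
            (hb.comp (Primrec.succ.to_comp.comp (Computable.fst.comp Computable.snd))))
          (Computable.const 1))).to₂)
  refine this.of_eq fun x => ?_
  have key : ∀ n, (Nat.rec (motive := fun _ => ℕ) 0
      (fun y IH => IH + min (x + 1 - sumTo ℓ (y + 1)) 1) n)
      = ∑ k ∈ Finset.range n, min (x + 1 - sumTo ℓ (k + 1)) 1 := by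
    intro n
    induction n with
    | zero => simp
    | succ n ih => rw [Finset.sum_range_succ, ← ih]
  exact key x

lemma b_mono {ℓ : ℕ → ℕ} (hpos : ∀ k, 1 ≤ ℓ k) : StrictMono (sumTo ℓ) :=
  strictMono_nat_of_lt_succ fun k => by have := hpos k; simp [sumTo]; omega

lemma b_ge {ℓ : ℕ → ℕ} (hpos : ∀ k, 1 ≤ ℓ k) : ∀ k, k ≤ sumTo ℓ k := by
  intro k; induction k with
  | zero => simp [sumTo]
  | succ n ih => have := hpos n; simp [sumTo]; omega

lemma idxF_eq {ℓ : ℕ → ℕ} (hpos : ∀ k, 1 ≤ ℓ k) (k x : ℕ)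
    (h1 : sumTo ℓ k ≤ x) (h2 : x < sumTo ℓ (k + 1)) : idxF ℓ x = k := by
  have hmono := (b_mono hpos).monotone
  have hkx : k ≤ x := le_trans (b_ge hpos k) h1
  unfold idxF
  have hterm : ∀ k' ∈ Finset.range x, min (x + 1 - sumTo ℓ (k' + 1)) 1
      = if k' < k then 1 else 0 := by
    intro k' _
    by_cases hk' : k' < k
    · have : sumTo ℓ (k' + 1) ≤ sumTo ℓ k := hmono hk'
      simp only [hk', if_true]; omega
    · have : sumTo ℓ (k + 1) ≤ sumTo ℓ (k' + 1) := hmono (by omega)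
      simp only [hk', if_false]; omega
  rw [Finset.sum_congr rfl hterm, Finset.sum_boole]
  have : (Finset.range x).filter (· < k) = Finset.range k := by
    ext a; simp; omega
  rw [this]; simp

lemma exists_rep {ℓ : ℕ → ℕ} (hpos : ∀ k, 1 ≤ ℓ k) (x : ℕ) :
    ∃ k r, r < ℓ k ∧ x = sumTo ℓ k + r := by
  have hex : ∃ k, x < sumTo ℓ (k + 1) :=
    ⟨x, lt_of_lt_of_le (Nat.lt_succ_self x) (b_ge hpos (x + 1))⟩
  have hk2 := Nat.find_spec hex
  set k := Nat.find hex with hkdef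
  have hk1 : sumTo ℓ k ≤ x := by
    rcases Nat.eq_zero_or_pos k with h0 | h0
    · rw [h0]; simp [sumTo]
    · have := Nat.find_min hex (m := k - 1) (by omega)
      have hkk : k - 1 + 1 = k := by omega
      rw [hkk] at this; omega
  have hsucc : sumTo ℓ (k + 1) = sumTo ℓ k + ℓ k := rfl
  exact ⟨k, x - sumTo ℓ k, by omega, by omega⟩

lemma ceil_facts {F L s : ℕ} (hF : 0 < F) (hFL : F ≤ L) (hL2 : L < 2 * F)
    (hs : s < F) :
    (s * L + (F - 1)) / F < L ∧ s * L ≤ ((s * L + (F - 1)) / F) * F ∧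
      ((s * L + (F - 1)) / F) * F < (s + 1) * L := by
  have hL : 0 < L := lt_of_lt_of_le hF hFL
  set A := s * L + (F - 1) with hA
  have h1 : A % F + F * (A / F) = A := Nat.mod_add_div A F
  have h2 : A % F < F := Nat.mod_lt _ hF
  have hcomm : A / F * F = F * (A / F) := Nat.mul_comm _ _
  have hb : s * L ≤ A / F * F := by omega
  have h3 : L * s + L ≤ L * F := by
    have : L * (s + 1) ≤ L * F := Nat.mul_le_mul_left L (by omega)
    nlinarith
  have hsl : s * L = L * s := Nat.mul_comm _ _
  have hc : A / F * F ≤ A := Nat.div_mul_le_self A F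
  have h4 : (s + 1) * L = s * L + L := by ring
  refine ⟨?_, hb, by omega⟩
  rw [Nat.div_lt_iff_lt_mul hF]
  omega

lemma quot_eq {F L s r : ℕ} (hL : 0 < L) (h1 : s * L ≤ r * F)
    (h2 : r * F < (s + 1) * L) : r * F / L = s := by
  have ha : s ≤ r * F / L := (Nat.le_div_iff_mul_le hL).2 h1
  have hbb : r * F / L < s + 1 := (Nat.div_lt_iff_lt_mul hL).2 (by
    have : (s + 1) * L = L * (s + 1) := Nat.mul_comm _ _
    omega)
  omega


lemma r_window {F L s r r0 : ℕ} (hF : 0 < F) (hFL : F ≤ L) (hL2 : L < 2 * F)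
    (hs : s < F) (hr0 : r0 = (s * L + (F - 1)) / F)
    (h1 : s * L ≤ r * F) (h2 : r * F < (s + 1) * L) : r = r0 ∨ r = r0 + 1 := by
  have hfacts := ceil_facts hF hFL hL2 hs
  rw [← hr0] at hfacts
  have hge : r0 ≤ r := by
    have hle : r0 ≤ (r * F + (F - 1)) / F :=
      hr0 ▸ Nat.div_le_div_right (by omega)
    have heq : (r * F + (F - 1)) / F = r := by
      rw [Nat.mul_comm r F, Nat.mul_add_div hF, Nat.div_eq_of_lt (by omega), Nat.add_zero]
    omega
  have hlt : r < r0 + 2 := by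
    have hmul : r * F < (r0 + 2) * F := by
      have e1 : (s + 1) * L = s * L + L := by ring
      have e2 : (r0 + 2) * F = r0 * F + 2 * F := by ring
      omega
    exact lt_of_mul_lt_mul_right hmul (Nat.zero_le F)
  omega

lemma block_unique {ℓ : ℕ → ℕ} (hpos : ∀ k, 1 ≤ ℓ k) {j k y : ℕ}
    (hj1 : sumTo ℓ j ≤ y) (hj2 : y < sumTo ℓ (j + 1))
    (hk1 : sumTo ℓ k ≤ y) (hk2 : y < sumTo ℓ (k + 1)) : j = k := by
  have hmono := (b_mono hpos).monotone
  rcases lt_trichotomy j k with h | h | h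
  · have := hmono (show j + 1 ≤ k by omega); omega
  · exact h
  · have := hmono (show k + 1 ≤ j by omega); omega

lemma blockStart_eq (k : ℕ) : blockStart k = sumTo Nat.factorial k :=
  (sumTo_eq _ _).symm

example : True := trivial


/-- **Blockwise coding map lemma.**  Let `ℓ : ℕ → ℕ` be computable with
`k! ≤ ℓ k < 2·k!` for every `k`.  With `a_k = blockStart k` and
`b_k = ∑_{m<k} ℓ m`, there is a total computable `h : ℕ → ℕ` given on each
block by `h (b_k + r) = a_k + ⌊r·k!/ℓ k⌋` for `0 ≤ r < ℓ k`, which maps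
`[b_k, b_{k+1})` onto `[a_k, a_{k+1})` for every `k`, is surjective, and has
every fiber of size at most 2. -/
theorem blockwise_coding_map (ℓ : ℕ → ℕ) (hcomp : Computable ℓ)
    (hlb : ∀ k, Nat.factorial k ≤ ℓ k) (hub : ∀ k, ℓ k < 2 * Nat.factorial k) :
    ∃ h : ℕ → ℕ,
      -- (i) h is a well-defined total computable function, given blockwise by
      Computable h ∧
      (∀ k r, r < ℓ k →
        h ((∑ m ∈ Finset.range k, ℓ m) + r) =
          blockStart k + r * Nat.factorial k / ℓ k) ∧
      -- (ii) h maps [b_k, b_{k+1}) onto [a_k, a_{k+1})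
      (∀ k, h '' Set.Ico (∑ m ∈ Finset.range k, ℓ m) (∑ m ∈ Finset.range (k + 1), ℓ m)
          = Set.Ico (blockStart k) (blockStart (k + 1))) ∧
      -- (iii) h is surjective
      Function.Surjective h ∧
      -- (iv) every fiber has at most 2 elements
      (∀ y, {x | h x = y}.encard ≤ 2) := by
  have hLpos : ∀ k, 0 < ℓ k := fun k => lt_of_lt_of_le (Nat.factorial_pos k) (hlb k)
  have hpos : ∀ k, 1 ≤ ℓ k := hLpos
  have hfpos : ∀ k, 1 ≤ Nat.factorial k := fun k => Nat.factorial_pos k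
  have hsum : ∀ k, (∑ m ∈ Finset.range k, ℓ m) = sumTo ℓ k := fun k => (sumTo_eq ℓ k).symm
  have hbsucc : ∀ k, sumTo ℓ (k + 1) = sumTo ℓ k + ℓ k := fun _ => rfl
  have hasucc : ∀ k, blockStart (k + 1) = blockStart k + Nat.factorial k :=
    fun k => Finset.sum_range_succ _ k
  have hfsucc : ∀ k, sumTo Nat.factorial (k + 1) = sumTo Nat.factorial k + Nat.factorial k :=
    fun _ => rfl
  set h : ℕ → ℕ := fun x =>
    blockStart (idxF ℓ x) + (x - sumTo ℓ (idxF ℓ x)) * Nat.factorial (idxF ℓ x) / ℓ (idxF ℓ x)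
    with hhdef
  -- the blockwise formula
  have hform : ∀ k r, r < ℓ k →
      h (sumTo ℓ k + r) = blockStart k + r * Nat.factorial k / ℓ k := by
    intro k r hr
    have hidx : idxF ℓ (sumTo ℓ k + r) = k :=
      idxF_eq hpos k _ (Nat.le_add_right _ _) (by rw [hbsucc]; omega)
    simp only [hhdef, hidx, Nat.add_sub_cancel_left]
  -- quotient bound
  have hqlt : ∀ k r, r < ℓ k → r * Nat.factorial k / ℓ k < Nat.factorial k := by
    intro k r hr
    rw [Nat.div_lt_iff_lt_mul (hLpos k)]
    calc r * Nat.factorial k < ℓ k * Nat.factorial k :=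
          Nat.mul_lt_mul_of_lt_of_le hr (le_refl _) (Nat.factorial_pos k)
      _ = Nat.factorial k * ℓ k := Nat.mul_comm _ _
  -- image of each block
  have himg : ∀ k, h '' Set.Ico (∑ m ∈ Finset.range k, ℓ m) (∑ m ∈ Finset.range (k + 1), ℓ m)
      = Set.Ico (blockStart k) (blockStart (k + 1)) := by
    intro k
    rw [hsum k, hsum (k + 1)]
    ext y
    simp only [Set.mem_image, Set.mem_Ico]
    constructor
    · rintro ⟨x, ⟨hx1, hx2⟩, rfl⟩
      rw [hbsucc] at hx2
      set r := x - sumTo ℓ k with hrdef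
      have hr : r < ℓ k := by omega
      have hxr : x = sumTo ℓ k + r := by omega
      rw [hxr, hform k r hr, hasucc]
      exact ⟨Nat.le_add_right _ _, Nat.add_lt_add_left (hqlt k r hr) _⟩
    · rintro ⟨hy1, hy2⟩
      rw [hasucc] at hy2
      set s := y - blockStart k with hsdef
      have hsF : s < Nat.factorial k := by omega
      obtain ⟨hrL, hb1, hb2⟩ := ceil_facts (Nat.factorial_pos k) (hlb k) (hub k) hsF
      set r := (s * ℓ k + (Nat.factorial k - 1)) / Nat.factorial k with hr0def
      have hq : r * Nat.factorial k / ℓ k = s := quot_eq (hLpos k) hb1 hb2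
      exact ⟨sumTo ℓ k + r, ⟨Nat.le_add_right _ _, by rw [hbsucc]; omega⟩,
        by rw [hform k r hrL, hq]; omega⟩
  -- surjectivity
  have hsurj : Function.Surjective h := by
    intro y
    obtain ⟨k, s, hsF, hy⟩ := exists_rep hfpos y
    have hmem : y ∈ Set.Ico (blockStart k) (blockStart (k + 1)) := by
      rw [Set.mem_Ico, blockStart_eq, blockStart_eq, hfsucc]
      omega
    rw [← himg k] at hmem
    obtain ⟨x, _, hx⟩ := hmem
    exact ⟨x, hx⟩
  refine ⟨h, ?_, ?_, himg, hsurj, ?_⟩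
  · -- computability
    have hbc := sumTo_computable hcomp
    have hidxc := idxF_computable hcomp
    have hac : Computable blockStart :=
      (sumTo_computable factorial_computable).of_eq fun k => (blockStart_eq k).symm
    exact Primrec.nat_add.to_comp.comp (hac.comp hidxc)
      (Primrec.nat_div.to_comp.comp
        (Primrec.nat_mul.to_comp.comp
          (Primrec.nat_sub.to_comp.comp Computable.id (hbc.comp hidxc))
          (factorial_computable.comp hidxc))
        (hcomp.comp hidxc))
  · -- formula with the stated sum
    intro k r hr
    rw [hsum k]
    exact hform k r hr
  · -- fibers of size at most 2
    intro y
    obtain ⟨k, s, hsF, hy⟩ := exists_rep hfpos y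
    have hyk : y = blockStart k + s := by rw [blockStart_eq]; omega
    set r0 := (s * ℓ k + (Nat.factorial k - 1)) / Nat.factorial k with hr0def
    have hsub : {x | h x = y} ⊆ {sumTo ℓ k + r0, sumTo ℓ k + r0 + 1} := by
      intro x hx
      simp only [Set.mem_setOf_eq] at hx
      obtain ⟨j, r, hrj, rfl⟩ := exists_rep hpos x
      rw [hform j r hrj] at hx
      have hqj := hqlt j r hrj
      obtain ⟨q, hqdef⟩ : ∃ q, r * Nat.factorial j / ℓ j = q := ⟨_, rfl⟩
      rw [hqdef] at hx hqj
      have hjk : j = k := by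
        refine block_unique hfpos (y := y) ?_ ?_ ?_ ?_
        · rw [← blockStart_eq]; omega
        · rw [hfsucc, ← blockStart_eq]; omega
        · rw [← blockStart_eq]; omega
        · rw [hfsucc, ← blockStart_eq]; omega
      subst hjk
      have hq : r * Nat.factorial j / ℓ j = s := by rw [hqdef]; omega
      have h1 : s * ℓ j ≤ r * Nat.factorial j :=
        (Nat.le_div_iff_mul_le (hLpos j)).1 (le_of_eq hq.symm)
      have h2 : r * Nat.factorial j < (s + 1) * ℓ j :=
        (Nat.div_lt_iff_lt_mul (hLpos j)).1 (by rw [hq]; exact Nat.lt_succ_self s)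
      rcases r_window (Nat.factorial_pos j) (hlb j) (hub j) hsF hr0def h1 h2 with hc | hc
      · exact Set.mem_insert_iff.2 (Or.inl (by rw [hc]))
      · exact Set.mem_insert_iff.2 (Or.inr (Set.mem_singleton_iff.2
          (by rw [hc, ← Nat.add_assoc])))
    calc {x | h x = y}.encard ≤ ({sumTo ℓ k + r0, sumTo ℓ k + r0 + 1} : Set ℕ).encard :=
          Set.encard_mono hsub
      _ ≤ ({sumTo ℓ k + r0 + 1} : Set ℕ).encard + 1 := Set.encard_insert_le _ _
      _ ≤ 2 := by rw [Set.encard_singleton]; norm_num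
end
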